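/- arXiv:1509.02978 — 7 statements merged into one kernel-verified Lean document; each statement's English description precedes it below -/
import Mathlib

section
/- Let A be a (possibly noncommutative) ring with identity and let N_1, …, N_s be pairwise non-isomorphic left A-modules, each having a local endomorphism ring. Set N = N_1 ⊕ ⋯ ⊕ N_s and E = End_A(N). Then an endomorphism f ∈ E lies in the Jacobson radical of E if and only if for every j ∈ {1, …, s} the composite π_j ∘ f ∘ ι_j lies in the Jacobson radical of End_A(N_j), where ι_j : N_j → N and π_j : N → N_j denote the canonical inclusion of and projection onto the j-th direct summand. -/
section RingLemmas

variable {R : Type*} [Ring R]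

/-- If `a*b` and `b*a` are units, then `a` is a unit. -/
lemma nc_unit_of_mul_unit {a b : R} (h1 : IsUnit (a * b)) (h2 : IsUnit (b * a)) : IsUnit a := by
  rcases h1 with ⟨u, hu⟩
  rcases h2 with ⟨v, hv⟩
  have hru : a * (b * ↑u⁻¹) = 1 := by rw [← mul_assoc, ← hu, Units.mul_inv]
  have hlu : (↑v⁻¹ * b) * a = 1 := by rw [mul_assoc, ← hv, Units.inv_mul]
  have hbe : (↑v⁻¹ * b : R) = b * ↑u⁻¹ := by
    calc (↑v⁻¹ * b : R) = (↑v⁻¹ * b) * (a * (b * ↑u⁻¹)) := by rw [hru, mul_one]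
    _ = ((↑v⁻¹ * b) * a) * (b * ↑u⁻¹) := by noncomm_ring
    _ = b * ↑u⁻¹ := by rw [hlu, one_mul]
  exact isUnit_iff_exists.mpr ⟨b * ↑u⁻¹, hru, hbe ▸ hlu⟩

/-- In any ring, `1 + x` is a unit when `x` is in the Jacobson radical. -/
lemma jac_one_add {x : R} (hx : x ∈ Ideal.jacobson (⊥ : Ideal R)) : IsUnit (1 + x) := by
  have key : ∀ y : R, y ∈ Ideal.jacobson (⊥ : Ideal R) → ∃ z : R, z * (1 + y) = 1 := by
    intro y hy
    obtain ⟨z, hz⟩ := Ideal.mem_jacobson_iff.mp hy 1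
    rw [Ideal.mem_bot] at hz
    refine ⟨z, ?_⟩
    rw [mul_one] at hz
    have h1 : z * y + z = 1 := sub_eq_zero.mp hz
    rw [mul_add, mul_one, add_comm]
    exact h1
  obtain ⟨z, hz⟩ := key x hx
  have hz' : z = 1 + -(z * x) := by
    have h1 : z + z * x = 1 := by rw [mul_add, mul_one] at hz; exact hz
    exact (eq_sub_of_add_eq h1).trans (sub_eq_add_neg 1 (z * x))
  have hmem : -(z * x) ∈ Ideal.jacobson (⊥ : Ideal R) :=
    neg_mem (Ideal.mul_mem_left _ z hx)
  obtain ⟨w, hw⟩ := key _ hmem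
  rw [← hz'] at hw
  have hweq : w = 1 + x := by
    calc w = w * (z * (1 + x)) := by rw [hz, mul_one]
    _ = (w * z) * (1 + x) := by rw [mul_assoc]
    _ = 1 + x := by rw [hw, one_mul]
  exact isUnit_iff_exists.mpr ⟨z, by rw [← hweq, hw], hz⟩

lemma jac_mem_of_forall {x : R} (h : ∀ y : R, IsUnit (1 + y * x)) :
    x ∈ Ideal.jacobson (⊥ : Ideal R) := by
  rw [Ideal.mem_jacobson_iff]
  intro y
  obtain ⟨u, hu⟩ := h y
  refine ⟨↑u⁻¹, ?_⟩
  rw [Ideal.mem_bot]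
  have h1 : (↑u⁻¹ : R) * (1 + y * x) = 1 := by rw [← hu, Units.inv_mul]
  have h2 : (↑u⁻¹ : R) * (1 + y * x) = ↑u⁻¹ * y * x + ↑u⁻¹ := by
    rw [mul_add, mul_one, ← mul_assoc, add_comm]
  rw [h2] at h1
  rw [h1, sub_self]

end RingLemmas

section LocalLemmas

variable {R : Type*} [Ring R] [IsLocalRing R]

lemma loc_or {a b : R} (h : a + b = 1) : IsUnit a ∨ IsUnit b :=
  IsLocalRing.isUnit_or_isUnit_of_add_one h

lemma loc_idem {e : R} (he : e * e = e) : e = 0 ∨ e = 1 := by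
  have h1 : e + (1 - e) = 1 := by noncomm_ring
  rcases loc_or h1 with h | h
  · right
    exact h.mul_left_cancel (by rw [he, mul_one])
  · left
    refine h.mul_left_cancel ?_
    rw [mul_zero, sub_mul, one_mul, he, sub_self]

lemma loc_unit_of_left_inv {a b : R} (h : b * a = 1) : IsUnit a := by
  have he : (a * b) * (a * b) = a * b := by rw [mul_assoc, ← mul_assoc b, h, one_mul]
  rcases loc_idem he with h0 | h1
  · have ha : a = 0 := by
      calc a = (a * b) * a := by rw [mul_assoc, h, mul_one]
      _ = 0 := by rw [h0, zero_mul]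
    rw [ha, mul_zero] at h
    exact absurd h zero_ne_one
  · exact isUnit_iff_exists.mpr ⟨b, h1, h⟩

lemma loc_unit_of_right_inv {a b : R} (h : a * b = 1) : IsUnit a := by
  have he : (b * a) * (b * a) = b * a := by rw [mul_assoc, ← mul_assoc a, h, one_mul]
  rcases loc_idem he with h0 | h1
  · have ha : a = 0 := by
      calc a = a * (b * a) := by rw [← mul_assoc, h, one_mul]
      _ = 0 := by rw [h0, mul_zero]
    rw [ha, zero_mul] at h
    exact absurd h zero_ne_one
  · exact isUnit_iff_exists.mpr ⟨b, h, h1⟩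

lemma loc_nonunit_mul_left {x : R} (a : R) (hx : ¬ IsUnit x) : ¬ IsUnit (a * x) := by
  rintro ⟨u, hu⟩
  exact hx (loc_unit_of_left_inv (b := ↑u⁻¹ * a) (by rw [mul_assoc, ← hu, Units.inv_mul]))

lemma loc_nonunit_mul_right {x : R} (a : R) (hx : ¬ IsUnit x) : ¬ IsUnit (x * a) := by
  rintro ⟨u, hu⟩
  exact hx (loc_unit_of_right_inv (b := a * ↑u⁻¹) (by rw [← mul_assoc, ← hu, Units.mul_inv]))

lemma loc_nonunit_neg {x : R} (hx : ¬ IsUnit x) : ¬ IsUnit (-x) := by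
  intro h
  exact hx (by simpa using h.neg)

lemma loc_nonunit_add {x y : R} (hx : ¬ IsUnit x) (hy : ¬ IsUnit y) : ¬ IsUnit (x + y) := by
  rintro ⟨u, hu⟩
  have h1 : (↑u⁻¹ * x) + (↑u⁻¹ * y) = 1 := by rw [← mul_add, ← hu, Units.inv_mul]
  rcases loc_or h1 with h | h
  · exact hx (by have := u.isUnit.mul h; rwa [← mul_assoc, Units.mul_inv, one_mul] at this)
  · exact hy (by have := u.isUnit.mul h; rwa [← mul_assoc, Units.mul_inv, one_mul] at this)

lemma loc_unit_add_nonunit {a m : R} (ha : IsUnit a) (hm : ¬ IsUnit m) : IsUnit (a + m) := by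
  by_contra h
  have h2 : ¬ IsUnit ((a + m) + (-m)) := loc_nonunit_add h (loc_nonunit_neg hm)
  have h3 : a + m + -m = a := by abel
  rw [h3] at h2
  exact h2 ha

lemma loc_one_add_nonunit {m : R} (hm : ¬ IsUnit m) : IsUnit (1 + m) :=
  loc_unit_add_nonunit isUnit_one hm

lemma loc_nonunit_sum {ι : Type*} (t : Finset ι) (f : ι → R)
    (h : ∀ i ∈ t, ¬ IsUnit (f i)) : ¬ IsUnit (∑ i ∈ t, f i) :=
  Finset.sum_induction f (fun x => ¬ IsUnit x) (fun _ _ => loc_nonunit_add)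
    not_isUnit_zero h

lemma loc_mem_jacobson_iff {x : R} :
    x ∈ Ideal.jacobson (⊥ : Ideal R) ↔ ¬ IsUnit x := by
  constructor
  · intro h hx
    have h2 := jac_one_add (Ideal.mul_mem_left _ (-(↑hx.unit⁻¹ : R)) h)
    rw [neg_mul, hx.val_inv_mul, add_neg_cancel] at h2
    exact not_isUnit_zero h2
  · intro hx
    exact jac_mem_of_forall fun y => loc_one_add_nonunit (loc_nonunit_mul_left y hx)

end LocalLemmas

section CrossLemma

variable {A : Type*} [Ring A]

/-- If `M₁ ≇ M₂` and both have local endomorphism rings, then a composite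
`M₁ → M₂ → M₁` is never an automorphism. -/
lemma cross_nonunit {M₁ M₂ : Type*} [AddCommGroup M₁] [AddCommGroup M₂]
    [Module A M₁] [Module A M₂]
    (h1 : IsLocalRing (Module.End A M₁)) (h2 : IsLocalRing (Module.End A M₂))
    (hne : IsEmpty (M₁ ≃ₗ[A] M₂)) (g : M₁ →ₗ[A] M₂) (h : M₂ →ₗ[A] M₁) :
    ¬ IsUnit (h ∘ₗ g : Module.End A M₁) := by
  intro hu
  set u : Module.End A M₁ := h ∘ₗ g with hu_def
  set v : Module.End A M₁ := ↑hu.unit⁻¹ with hv_def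
  have hv1 : u * v = 1 := hu.mul_val_inv
  have hv2 : v * u = 1 := hu.val_inv_mul
  have hvu : ∀ z, v (u z) = z := fun z => by
    have := LinearMap.ext_iff.mp hv2 z
    simpa [Module.End.mul_apply] using this
  have huv : ∀ z, u (v z) = z := fun z => by
    have := LinearMap.ext_iff.mp hv1 z
    simpa [Module.End.mul_apply] using this
  set e : Module.End A M₂ := g ∘ₗ (v ∘ₗ h) with he_def
  have he : e * e = e := by
    refine LinearMap.ext fun x => ?_
    show g (v (h (g (v (h x))))) = g (v (h x))
    rw [show h (g (v (h x))) = u (v (h x)) from rfl, huv]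
  rcases loc_idem he with h0 | h1'
  · have hu0 : u = 0 := by
      refine LinearMap.ext fun z => ?_
      have hz : u z = h (e (g z)) := by
        show u z = h (g (v (h (g z))))
        rw [show h (g (v (h (g z)))) = u (v (u z)) from rfl, huv]
      rw [hz, h0]
      simp
    rw [hu0] at hu
    exact not_isUnit_zero hu
  · refine hne.false (LinearEquiv.ofLinear g (v ∘ₗ h) ?_ ?_)
    · refine LinearMap.ext fun x => ?_
      have := LinearMap.ext_iff.mp h1' x
      simpa [he_def] using this
    · refine LinearMap.ext fun x => ?_
      show v (h (g x)) = x
      exact hvu x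

end CrossLemma

section Components

variable {A : Type*} [Ring A] {s : ℕ} {N : Fin s → Type*}
  [∀ j, AddCommGroup (N j)] [∀ j, Module A (N j)]

/-- The `(i,j)`-component of an endomorphism of a finite direct product. -/
def dcomp (f : Module.End A (∀ j, N j)) (i j : Fin s) : N j →ₗ[A] N i :=
  (LinearMap.proj i) ∘ₗ (f : (∀ k, N k) →ₗ[A] (∀ k, N k)) ∘ₗ (LinearMap.single A N j)

lemma dcomp_apply (f : Module.End A (∀ j, N j)) (i j : Fin s) (y : N j) :
    dcomp f i j y = f (Pi.single j y) i := rfl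

lemma dcomp_add (f g : Module.End A (∀ j, N j)) (i j : Fin s) :
    dcomp (f + g) i j = dcomp f i j + dcomp g i j := by
  refine LinearMap.ext fun y => ?_
  simp [dcomp_apply]

lemma dcomp_neg (f : Module.End A (∀ j, N j)) (i j : Fin s) :
    dcomp (-f) i j = -(dcomp f i j) := by
  refine LinearMap.ext fun y => ?_
  simp [dcomp_apply]

lemma dcomp_one (j : Fin s) :
    dcomp (1 : Module.End A (∀ j, N j)) j j = 1 := by
  refine LinearMap.ext fun y => ?_
  simp [dcomp_apply]

lemma dcomp_mul (f g : Module.End A (∀ j, N j)) (i j : Fin s) :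
    dcomp (f * g) i j = ∑ k, (dcomp f i k) ∘ₗ (dcomp g k j) := by
  refine LinearMap.ext fun y => ?_
  have hx : (g (Pi.single j y)) = ∑ k, Pi.single k ((g (Pi.single j y)) k) :=
    (Finset.univ_sum_single _).symm
  rw [LinearMap.sum_apply]
  simp only [LinearMap.comp_apply, dcomp_apply, Module.End.mul_apply]
  conv_lhs => rw [hx]
  rw [map_sum, Finset.sum_apply]

end Components

section BlockDiag

variable {E : Type*} [Ring E]

/-- An element that is "block diagonal" w.r.t. an idempotent `e`, with both corner
blocks invertible in the corner rings, is a unit. -/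
lemma blockdiag_isUnit {e v a' s' : E} (he : e * e = e)
    (hv : v = e*v*e + (1-e)*v*(1-e))
    (ha1 : a' * (e*v*e) = e) (ha2 : (e*v*e) * a' = e) (ha3 : a' = e*a'*e)
    (hs1 : s' * ((1-e)*v*(1-e)) = 1-e) (hs2 : ((1-e)*v*(1-e)) * s' = 1-e)
    (hs3 : s' = (1-e)*s'*(1-e)) :
    IsUnit v := by
  have hef : e * (1 - e) = 0 := by rw [mul_sub, he, mul_one, sub_self]
  have hfe : (1 - e) * e = 0 := by rw [sub_mul, he, one_mul, sub_self]
  have hx1 : (e*v*e) * s' = 0 := by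
    rw [hs3]
    calc (e*v*e) * ((1-e)*s'*(1-e)) = (e*v*(e*(1-e)))*(s'*(1-e)) := by noncomm_ring
    _ = 0 := by rw [hef, mul_zero, zero_mul]
  have hx2 : ((1-e)*v*(1-e)) * a' = 0 := by
    rw [ha3]
    calc ((1-e)*v*(1-e)) * (e*a'*e) = ((1-e)*v*((1-e)*e))*(a'*e) := by noncomm_ring
    _ = 0 := by rw [hfe, mul_zero, zero_mul]
  have hy1 : s' * (e*v*e) = 0 := by
    rw [hs3]
    calc ((1-e)*s'*(1-e)) * (e*v*e) = ((1-e)*s'*((1-e)*e))*(v*e) := by noncomm_ring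
    _ = 0 := by rw [hfe, mul_zero, zero_mul]
  have hy2 : a' * ((1-e)*v*(1-e)) = 0 := by
    rw [ha3]
    calc (e*a'*e) * ((1-e)*v*(1-e)) = (e*a'*(e*(1-e)))*(v*(1-e)) := by noncomm_ring
    _ = 0 := by rw [hef, mul_zero, zero_mul]
  refine isUnit_iff_exists.mpr ⟨a' + s', ?_, ?_⟩
  · calc v * (a' + s') = (e*v*e + (1-e)*v*(1-e)) * (a' + s') := by rw [← hv]
    _ = (e*v*e)*a' + ((e*v*e)*s' + (((1-e)*v*(1-e))*a' + ((1-e)*v*(1-e))*s')) := by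
        noncomm_ring
    _ = 1 := by rw [ha2, hx1, hx2, hs2, zero_add, zero_add]; noncomm_ring
  · calc (a' + s') * v = (a' + s') * (e*v*e + (1-e)*v*(1-e)) := by rw [← hv]
    _ = a'*(e*v*e) + (a'*((1-e)*v*(1-e)) + (s'*(e*v*e) + s'*((1-e)*v*(1-e)))) := by
        noncomm_ring
    _ = 1 := by rw [ha1, hy1, hy2, hs1, zero_add, zero_add]; noncomm_ring

lemma nr_decomp {E : Type*} [Ring E] (e v : E) :
    v = e*v*e + (e*v*(1-e) + ((1-e)*v*e + (1-e)*v*(1-e))) := by noncomm_ring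

lemma nr_elim {E : Type*} [Ring E] (c u r : E) :
    (1-c)*u*(1-r) = u + (-(c*u) + (-(u*r) + c*u*r)) := by noncomm_ring

lemma nr_nilp1 {E : Type*} [Ring E] (c : E) : (1 - c) * (1 + c) = 1 - c*c := by noncomm_ring

lemma nr_nilp2 {E : Type*} [Ring E] (c : E) : (1 + c) * (1 - c) = 1 - c*c := by noncomm_ring

lemma nr_conj {E : Type*} [Ring E] (c u r : E) :
    (1+c)*((1-c)*u*(1-r))*(1+r) = ((1+c)*(1-c))*u*((1-r)*(1+r)) := by noncomm_ring

end BlockDiag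

section MainInduction

variable {A : Type*} [Ring A]

lemma isUnit_of_isUnit_diag :
    ∀ (s : ℕ) (N : Fin s → Type v) [∀ j, AddCommGroup (N j)] [∀ j, Module A (N j)],
      (∀ j, IsLocalRing (Module.End A (N j))) →
      (∀ i j, i ≠ j → IsEmpty (N i ≃ₗ[A] N j)) →
      ∀ u : Module.End A (∀ j, N j), (∀ j, IsUnit (dcomp u j j)) → IsUnit u := by
  intro s
  induction s with
  | zero =>
    intro N _ _ _ _ u _
    exact (Subsingleton.elim u 1) ▸ isUnit_one
  | succ s IH =>
    intro N instAG instMod hloc hpair u hdiag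
    classical
    haveI hL0 : IsLocalRing (Module.End A (N 0)) := hloc 0
    set a : Module.End A (N 0) := dcomp u 0 0 with ha_def
    have ha : IsUnit a := hdiag 0
    set a' : Module.End A (N 0) := ↑ha.unit⁻¹ with ha'_def
    have hpaa' : ∀ y, a (a' y) = y := fun y => by
      rw [ha'_def, ← Module.End.mul_apply, ha.mul_val_inv, Module.End.one_apply]
    have hpa'a : ∀ y, a' (a y) = y := fun y => by
      rw [ha'_def, ← Module.End.mul_apply, ha.val_inv_mul, Module.End.one_apply]
    set ι0 : N 0 →ₗ[A] (∀ j, N j) := LinearMap.single A N 0 with hι0_def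
    set π0 : (∀ j, N j) →ₗ[A] N 0 := LinearMap.proj 0 with hπ0_def
    set e : Module.End A (∀ j, N j) := ι0 ∘ₗ π0 with he_def
    set X : Module.End A (∀ j, N j) := ι0 ∘ₗ (a' : N 0 →ₗ[A] N 0) ∘ₗ π0 with hX_def
    set c : Module.End A (∀ j, N j) := (1 - e) * u * X with hc_def
    set r : Module.End A (∀ j, N j) := X * u * (1 - e) with hr_def
    set v : Module.End A (∀ j, N j) := (1 - c) * u * (1 - r) with hv_def
    -- pointwise formulas
    have hpe : ∀ x, e x = Pi.single 0 (x 0) := fun x => by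
      simp [he_def, hι0_def, hπ0_def]
    have hpX : ∀ x, X x = Pi.single 0 (a' (x 0)) := fun x => by
      simp [hX_def, hι0_def, hπ0_def]
    have hpone : ∀ x : (∀ j, N j), ((1 - e) : Module.End A (∀ j, N j)) x
        = x - Pi.single 0 (x 0) := fun x => by
      rw [LinearMap.sub_apply, Module.End.one_apply, hpe]
    have hpc : ∀ x, c x = u (Pi.single 0 (a' (x 0)))
        - Pi.single 0 ((u (Pi.single 0 (a' (x 0)))) 0) := fun x => by
      rw [hc_def, Module.End.mul_apply, Module.End.mul_apply, hpX, hpone]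
    have hpr : ∀ x, r x = Pi.single 0 (a' ((u (x - Pi.single 0 (x 0))) 0)) := fun x => by
      rw [hr_def, Module.End.mul_apply, Module.End.mul_apply, hpone, hpX]
    have hpa_apply : ∀ y : N 0, a y = (u (Pi.single 0 y)) 0 := fun y => rfl
    -- the zero-th component of `c x` vanishes
    have hc0 : ∀ x, (c x) 0 = 0 := fun x => by
      rw [hpc]
      simp
    have hc2 : c * c = 0 := by
      refine LinearMap.ext fun x => ?_
      rw [Module.End.mul_apply, hpc, hc0]
      simp
    have hr_single : ∀ t : N 0, r (Pi.single 0 t) = 0 := fun t => by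
      rw [hpr]
      simp
    have hr2 : r * r = 0 := by
      refine LinearMap.ext fun x => ?_
      rw [Module.End.mul_apply, hpr x, hr_single]
      rfl
    -- key pointwise identities for v
    have hH2 : ∀ t : N 0, v (Pi.single 0 t) = Pi.single 0 (a t) := fun t => by
      rw [hv_def]
      rw [Module.End.mul_apply, Module.End.mul_apply]
      rw [show ((1 - r) : Module.End A (∀ j, N j)) (Pi.single 0 t)
            = Pi.single 0 t from by
        rw [LinearMap.sub_apply, Module.End.one_apply, hr_single, sub_zero]]
      rw [LinearMap.sub_apply, Module.End.one_apply, hpc]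
      rw [show (u (Pi.single 0 t)) 0 = a t from rfl]
      rw [hpa'a]
      rw [show (u (Pi.single 0 t)) 0 = a t from rfl]
      abel
    have huq : ∀ t : N 0, (u (Pi.single 0 t)) 0 = a t := fun _ => rfl
    have hH1 : ∀ x, (v x) 0 = a (x 0) := fun x => by
      have h1 : v x = (1 - c) (u ((1 - r) x)) := rfl
      have h2 : ((1 : Module.End A (∀ j, N j)) - r) x
          = x - Pi.single 0 (a' ((u (x - Pi.single 0 (x 0))) 0)) := by
        rw [LinearMap.sub_apply, Module.End.one_apply, hpr]
      rw [h1, h2]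
      rw [show ∀ y, (((1 : Module.End A (∀ j, N j)) - c) y) 0 = y 0 from fun y => by
        rw [LinearMap.sub_apply, Module.End.one_apply, Pi.sub_apply, hc0, sub_zero]]
      rw [map_sub, Pi.sub_apply, huq, map_sub, Pi.sub_apply, huq, hpaa']
      abel
    -- idempotent and off-diagonal-zero facts
    have hee : e * e = e := by
      refine LinearMap.ext fun x => ?_
      rw [Module.End.mul_apply, hpe, hpe, Pi.single_eq_same]
    have hev : e * v * (1 - e) = 0 := by
      refine LinearMap.ext fun x => ?_
      rw [Module.End.mul_apply, Module.End.mul_apply, hpone, hpe, hH1, Pi.sub_apply,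
        Pi.single_eq_same, sub_self, map_zero, Pi.single_zero, LinearMap.zero_apply]
    have hfv : (1 - e) * v * e = 0 := by
      refine LinearMap.ext fun x => ?_
      rw [Module.End.mul_apply, Module.End.mul_apply, hpe, hH2, hpone, Pi.single_eq_same,
        sub_self, LinearMap.zero_apply]
    have hvdec : v = e*v*e + (1-e)*v*(1-e) := by
      have h0 := nr_decomp e v
      rw [hev, hfv] at h0
      rw [zero_add, zero_add] at h0
      exact h0
    have hXe1 : X * (e*v*e) = e := by
      refine LinearMap.ext fun x => ?_
      simp only [Module.End.mul_apply, hpe, hpX, hH1, Pi.single_eq_same, hpa'a]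
    have hXe2 : (e*v*e) * X = e := by
      refine LinearMap.ext fun x => ?_
      simp only [Module.End.mul_apply, hpe, hpX, hH1, Pi.single_eq_same, hpa'a, hpaa']
    have hXe3 : X = e * X * e := by
      refine LinearMap.ext fun x => ?_
      simp only [Module.End.mul_apply, hpe, hpX, Pi.single_eq_same]
    -- transfer maps to the smaller family
    set P := ∀ i : Fin s, N i.succ with hP_def
    set σ : (∀ i : Fin s, N i.succ) →ₗ[A] (∀ j, N j) :=
      LinearMap.pi (fun j : Fin (s+1) =>
        Fin.cases (motive := fun j => (∀ i : Fin s, N i.succ) →ₗ[A] N j)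
          0 (fun i => LinearMap.proj i) j) with hσ_def
    set ρ : (∀ j, N j) →ₗ[A] (∀ i : Fin s, N i.succ) :=
      LinearMap.pi (fun i : Fin s => LinearMap.proj i.succ) with hρ_def
    have hpρ : ∀ (x : ∀ j, N j) i, (ρ x) i = x i.succ := fun x i => by
      rw [hρ_def, LinearMap.pi_apply, LinearMap.proj_apply]
    have hpσ0 : ∀ p, (σ p) 0 = 0 := fun p => by
      rw [hσ_def, LinearMap.pi_apply, Fin.cases_zero, LinearMap.zero_apply]
    have hpσsucc : ∀ p i, (σ p) i.succ = p i := fun p i => by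
      rw [hσ_def, LinearMap.pi_apply, Fin.cases_succ, LinearMap.proj_apply]
    have hpρσ : ∀ p, ρ (σ p) = p := fun p => funext fun i => by
      rw [hpρ, hpσsucc]
    have hpσρ : ∀ x, σ (ρ x) = x - Pi.single 0 (x 0) := fun x => funext fun k => by
      induction k using Fin.cases with
      | zero => rw [hpσ0, Pi.sub_apply, Pi.single_eq_same, sub_self]
      | succ i => rw [hpσsucc, hpρ, Pi.sub_apply, Pi.single_eq_of_ne (Fin.succ_ne_zero i), sub_zero]
    have h1e : ∀ y : (∀ j, N j), ((1 - e) : Module.End A (∀ j, N j)) y = σ (ρ y) := fun y => by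
      rw [hpone, hpσρ]
    have hρ0 : ∀ t : N 0, ρ (Pi.single 0 t) = 0 := fun t => funext fun i => by
      rw [hpρ, Pi.single_eq_of_ne (Fin.succ_ne_zero i)]
      rfl
    have hσs : ∀ (j : Fin s) (y : N j.succ), σ (Pi.single j y) = Pi.single j.succ y := by
      intro j y
      funext k
      induction k using Fin.cases with
      | zero => rw [hpσ0, Pi.single_eq_of_ne (Ne.symm (Fin.succ_ne_zero j))]
      | succ i =>
        rw [hpσsucc]
        rcases eq_or_ne i j with rfl | hij
        · rw [Pi.single_eq_same, Pi.single_eq_same]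
        · rw [Pi.single_eq_of_ne hij,
            Pi.single_eq_of_ne (fun h => hij (Fin.succ_injective _ h))]
    obtain ⟨w, hw_def⟩ : ∃ w' : Module.End A (∀ i : Fin s, N i.succ),
        w' = ρ ∘ₗ (v : (∀ j, N j) →ₗ[A] (∀ j, N j)) ∘ₗ σ := ⟨_, rfl⟩
    have hpw : ∀ p, w p = ρ (v (σ p)) := fun p => by rw [hw_def]; rfl
    have hwdiag : ∀ j : Fin s, dcomp w j j = dcomp v j.succ j.succ := fun j =>
      LinearMap.ext fun y => by
        rw [dcomp_apply, dcomp_apply, hpw, hpρ, hσs]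
    -- the diagonal entries of `v` away from 0 are units
    have hvdiag : ∀ j : Fin s, IsUnit (dcomp v j.succ j.succ) := by
      intro j
      haveI := hloc j.succ
      set g : N j.succ →ₗ[A] N 0 := dcomp u 0 j.succ with hg_def
      set h2 : N 0 →ₗ[A] N j.succ := dcomp u j.succ 0 ∘ₗ (a' : N 0 →ₗ[A] N 0) with hh2_def
      have hcross : ¬ IsUnit (h2 ∘ₗ g : Module.End A (N j.succ)) :=
        cross_nonunit (hloc j.succ) (hloc 0) (hpair j.succ 0 (Fin.succ_ne_zero j)) g h2
      have hsz : ∀ y : N j.succ, (Pi.single j.succ y : ∀ j, N j) 0 = 0 := fun y =>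
        Pi.single_eq_of_ne (Ne.symm (Fin.succ_ne_zero j)) y
      have hcu_eq : dcomp (c*u) j.succ j.succ = h2 ∘ₗ g := LinearMap.ext fun y => by
        rw [dcomp_apply, Module.End.mul_apply, hpc, Pi.sub_apply,
          Pi.single_eq_of_ne (Fin.succ_ne_zero j), sub_zero]
        rfl
      have hur_eq : dcomp (u*r) j.succ j.succ = h2 ∘ₗ g := LinearMap.ext fun y => by
        rw [dcomp_apply, Module.End.mul_apply, hpr, hsz, Pi.single_zero, sub_zero]
        rfl
      have hcur_eq : dcomp (c*u*r) j.succ j.succ = h2 ∘ₗ g := LinearMap.ext fun y => by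
        rw [dcomp_apply, Module.End.mul_apply, Module.End.mul_apply, hpr, hsz,
          Pi.single_zero, sub_zero, hpc, Pi.sub_apply,
          Pi.single_eq_of_ne (Fin.succ_ne_zero j), sub_zero, huq, hpaa']
        rfl
      have hexp : dcomp v j.succ j.succ = dcomp u j.succ j.succ +
          (-(dcomp (c*u) j.succ j.succ) + (-(dcomp (u*r) j.succ j.succ)
            + dcomp (c*u*r) j.succ j.succ)) := by
        have h0 : v = u + (-(c*u) + (-(u*r) + c*u*r)) := by rw [hv_def]; exact nr_elim c u r
        rw [h0, dcomp_add, dcomp_add, dcomp_add, dcomp_neg, dcomp_neg]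
      rw [hcu_eq, hur_eq, hcur_eq] at hexp
      have hsimp : dcomp v j.succ j.succ
          = dcomp u j.succ j.succ + -(h2 ∘ₗ g : Module.End A (N j.succ)) := by
        rw [hexp]; abel
      rw [hsimp]
      exact loc_unit_add_nonunit (hdiag j.succ) (loc_nonunit_neg hcross)
    -- apply the induction hypothesis
    have hw : IsUnit w := by
      apply IH (fun i => N i.succ) (fun i => hloc i.succ)
        (fun i k hik => hpair i.succ k.succ (fun h => hik (Fin.succ_injective _ h)))
      intro j
      rw [hwdiag j]
      exact hvdiag j
    obtain ⟨w', hww'1, hww'2⟩ : ∃ z, w * z = 1 ∧ z * w = 1 :=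
      ⟨↑hw.unit⁻¹, hw.mul_val_inv, hw.val_inv_mul⟩
    have hpww' : ∀ p, w (w' p) = p := fun p => by
      rw [← Module.End.mul_apply, hww'1, Module.End.one_apply]
    have hpw'w : ∀ p, w' (w p) = p := fun p => by
      rw [← Module.End.mul_apply, hww'2, Module.End.one_apply]
    obtain ⟨s', hs'_def⟩ : ∃ z : Module.End A (∀ j, N j),
        z = σ ∘ₗ (w' : (∀ i : Fin s, N i.succ) →ₗ[A] (∀ i : Fin s, N i.succ)) ∘ₗ ρ := ⟨_, rfl⟩
    have hps' : ∀ x, s' x = σ (w' (ρ x)) := fun x => by rw [hs'_def]; rfl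
    have hfvf_pt : ∀ x, (((1-e)*v*(1-e)) : Module.End A (∀ j, N j)) x = σ (w (ρ x)) :=
      fun x => by
        rw [Module.End.mul_apply, Module.End.mul_apply, h1e, h1e, hpw]
    have hs1 : s' * ((1-e)*v*(1-e)) = 1 - e := by
      refine LinearMap.ext fun x => ?_
      simp only [Module.End.mul_apply, hfvf_pt, hps', hpρσ, hpw'w, hpσρ, hpone]
    have hs2 : ((1-e)*v*(1-e)) * s' = 1 - e := by
      refine LinearMap.ext fun x => ?_
      simp only [Module.End.mul_apply, hfvf_pt, hps', hpρσ, hpww', hpσρ, hpone]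
    have hs3 : s' = (1-e)*s'*(1-e) := by
      refine LinearMap.ext fun x => ?_
      simp only [Module.End.mul_apply, h1e, hps', hpρσ]
    have hvUnit : IsUnit v := blockdiag_isUnit hee hvdec hXe1 hXe2 hXe3 hs1 hs2 hs3
    have hc1a : (1 - c) * (1 + c) = 1 := by rw [nr_nilp1, hc2, sub_zero]
    have hc1b : (1 + c) * (1 - c) = 1 := by rw [nr_nilp2, hc2, sub_zero]
    have hr1a : (1 - r) * (1 + r) = 1 := by rw [nr_nilp1, hr2, sub_zero]
    have hr1b : (1 + r) * (1 - r) = 1 := by rw [nr_nilp2, hr2, sub_zero]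
    have hueq : (1 + c) * v * (1 + r) = u := by
      rw [hv_def, nr_conj, hc1b, hr1a, one_mul, mul_one]
    rw [← hueq]
    exact ((isUnit_iff_exists.mpr ⟨1 - c, hc1b, hc1a⟩).mul hvUnit).mul
      (isUnit_iff_exists.mpr ⟨1 - r, hr1b, hr1a⟩)

end MainInduction

section DiagOfUnit

variable {A : Type*} [Ring A] {s : ℕ} {N : Fin s → Type*}
  [∀ j, AddCommGroup (N j)] [∀ j, Module A (N j)]

lemma diag_of_unit (hloc : ∀ j, IsLocalRing (Module.End A (N j)))
    (hpair : ∀ i j, i ≠ j → IsEmpty (N i ≃ₗ[A] N j))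
    (u : Module.End A (∀ j, N j)) (hu : IsUnit u) (j : Fin s) :
    IsUnit (dcomp u j j) := by
  classical
  haveI := hloc j
  obtain ⟨v, hv1, hv2⟩ : ∃ v, u * v = 1 ∧ v * u = 1 :=
    ⟨↑hu.unit⁻¹, hu.mul_val_inv, hu.val_inv_mul⟩
  have hcross : ∀ (g h : Module.End A (∀ j, N j)),
      ¬ IsUnit (∑ k ∈ Finset.univ.erase j, dcomp g j k ∘ₗ dcomp h k j) := by
    intro g h
    refine loc_nonunit_sum _ _ fun k hk => ?_
    exact cross_nonunit (hloc j) (hloc k)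
      (hpair j k (Ne.symm (Finset.mem_erase.mp hk).1)) (dcomp h k j) (dcomp g j k)
  have key : ∀ (g h : Module.End A (∀ j, N j)), g * h = 1 →
      IsUnit (dcomp g j j * dcomp h j j) := by
    intro g h hgh
    have h1 : dcomp (g * h) j j = 1 := by rw [hgh, dcomp_one]
    rw [dcomp_mul, ← Finset.add_sum_erase _ _ (Finset.mem_univ j)] at h1
    have hA : dcomp g j j ∘ₗ dcomp h j j
        = 1 + -(∑ k ∈ Finset.univ.erase j, dcomp g j k ∘ₗ dcomp h k j) := by
      rw [← h1]; abel
    rw [Module.End.mul_eq_comp, hA]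
    exact loc_one_add_nonunit (loc_nonunit_neg (hcross g h))
  exact nc_unit_of_mul_unit (key u v hv1) (key v u hv2)

end DiagOfUnit

/-- Let `A` be a (possibly noncommutative) ring and `N 1, …, N s`
pairwise non-isomorphic left `A`-modules, each with a local endomorphism ring.
An endomorphism `f` of `N = N 1 ⊕ ⋯ ⊕ N s` lies in the Jacobson radical of
`End_A N` iff each diagonal component `π j ∘ f ∘ ι j` lies in the Jacobson
radical of `End_A (N j)`. -/
theorem stmt0 {A : Type*} [Ring A] {s : ℕ} (N : Fin s → Type*)
    [∀ j, AddCommGroup (N j)] [∀ j, Module A (N j)]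
    (hloc : ∀ j, IsLocalRing (Module.End A (N j)))
    (hpair : ∀ i j, i ≠ j → IsEmpty (N i ≃ₗ[A] N j))
    (f : Module.End A (∀ j, N j)) :
    f ∈ Ideal.jacobson (⊥ : Ideal (Module.End A (∀ j, N j))) ↔
      ∀ j, (LinearMap.proj j) ∘ₗ (f : (∀ i, N i) →ₗ[A] (∀ i, N i)) ∘ₗ (LinearMap.single A N j) ∈
        Ideal.jacobson (⊥ : Ideal (Module.End A (N j))) := by

  classical
  constructor
  · intro hf j
    haveI := hloc j
    rw [show ((LinearMap.proj j) ∘ₗ (f : (∀ i, N i) →ₗ[A] (∀ i, N i)) ∘ₗ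
        (LinearMap.single A N j)) = dcomp f j j from rfl]
    rw [loc_mem_jacobson_iff]
    intro hb
    obtain ⟨binv, hb1, hb2⟩ : ∃ z, dcomp f j j * z = 1 ∧ z * dcomp f j j = 1 :=
      ⟨↑hb.unit⁻¹, hb.mul_val_inv, hb.val_inv_mul⟩
    have hpb : ∀ t, binv (dcomp f j j t) = t := fun t => by
      rw [← Module.End.mul_apply, hb2, Module.End.one_apply]
    set y : Module.End A (∀ j, N j) :=
      (LinearMap.single A N j) ∘ₗ ((-binv : N j →ₗ[A] N j) ∘ₗ (LinearMap.proj j)) with hy_def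
    have hyf : IsUnit (1 + y * f) := jac_one_add (Ideal.mul_mem_left _ y hf)
    have hdd : dcomp (1 + y * f) j j = 0 := by
      have h1 : dcomp (y * f) j j = -(1 : Module.End A (N j)) := by
        refine LinearMap.ext fun t => ?_
        simp only [dcomp_apply, Module.End.mul_apply, hy_def, LinearMap.comp_apply,
          LinearMap.coe_single, LinearMap.proj_apply, Pi.single_eq_same,
          LinearMap.neg_apply, Module.End.one_apply]
        rw [show (f (Pi.single j t)) j = dcomp f j j t from rfl, hpb]
      rw [dcomp_add, dcomp_one, h1, add_neg_cancel]
    have h2 := diag_of_unit hloc hpair _ hyf j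
    rw [hdd] at h2
    exact not_isUnit_zero h2
  · intro hd
    apply jac_mem_of_forall
    intro y
    apply isUnit_of_isUnit_diag s N hloc hpair
    intro j
    haveI := hloc j
    have hfd : ¬ IsUnit (dcomp f j j) := by
      have h3 := hd j
      rwa [show ((LinearMap.proj j) ∘ₗ (f : (∀ i, N i) →ₗ[A] (∀ i, N i)) ∘ₗ
        (LinearMap.single A N j)) = dcomp f j j from rfl, loc_mem_jacobson_iff] at h3
    rw [dcomp_add, dcomp_one, dcomp_mul]
    apply loc_one_add_nonunit
    apply loc_nonunit_sum
    intro k _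
    rcases eq_or_ne k j with rfl | hkj
    · rw [← Module.End.mul_eq_comp]
      exact loc_nonunit_mul_left _ hfd
    · exact cross_nonunit (hloc j) (hloc k) (hpair j k (Ne.symm hkj))
        (dcomp f k j) (dcomp y j k)
end

section
/- Let A be a (possibly noncommutative) ring with identity and let N_1, …, N_s be pairwise non-isomorphic left A-modules, each having a local endomorphism ring with Jacobson radical 𝔪_j and residue division ring D_j = End_A(N_j)/𝔪_j. Set N = N_1 ⊕ ⋯ ⊕ N_s and E = End_A(N). Then the map E → D_1 × ⋯ × D_s sending f to the tuple of classes (π_j ∘ f ∘ ι_j mod 𝔪_j)_{j=1,…,s} is a surjective ring homomorphism whose kernel equals the Jacobson radical of E. In particular, E modulo its Jacobson radical is isomorphic as a ring to the product of the division rings D_1 × ⋯ × D_s, so E is semilocal (its quotient by its Jacobson radical is a semisimple ring). -/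
section LocalAux

variable {R : Type*} [Ring R]


lemma aux_add_unit [IsLocalRing R] {a b : R} (h : IsUnit (a + b)) :
    IsUnit a ∨ IsUnit b := by
  rcases h with ⟨u, hu⟩
  have h1 : (↑u⁻¹ * a) + (↑u⁻¹ * b) = 1 := by rw [← mul_add, ← hu, u.inv_mul]
  rcases IsLocalRing.isUnit_or_isUnit_of_add_one h1 with h | h
  · left
    have h2 := u.isUnit.mul h
    rwa [← mul_assoc, u.mul_inv, one_mul] at h2
  · right
    have h2 := u.isUnit.mul h
    rwa [← mul_assoc, u.mul_inv, one_mul] at h2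

lemma aux_idem [IsLocalRing R] {e : R} (he : e * e = e) : e = 0 ∨ e = 1 := by
  have h1 : IsUnit (e + (1 - e)) := by simp
  rcases aux_add_unit h1 with h | h
  · right
    rcases h with ⟨u, hu⟩
    have h0 : (1 - e) * e = 0 := by rw [sub_mul, he, one_mul, sub_self]
    have h2 : (1 : R) - e = 0 := by
      calc (1 : R) - e = (1 - e) * (↑u * ↑u⁻¹) := by rw [u.mul_inv, mul_one]
        _ = ((1 - e) * e) * ↑u⁻¹ := by rw [← hu, mul_assoc]
        _ = 0 := by rw [h0, zero_mul]
    have := sub_eq_zero.mp h2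
    exact this.symm
  · left
    rcases h with ⟨u, hu⟩
    have h0 : e * (1 - e) = 0 := by rw [mul_sub, he, mul_one, sub_self]
    calc e = e * ((1 - e) * ↑u⁻¹) := by rw [← hu, u.mul_inv, mul_one]
      _ = (e * (1 - e)) * ↑u⁻¹ := by rw [mul_assoc]
      _ = 0 := by rw [h0, zero_mul]

lemma aux_left_inv_isUnit [IsLocalRing R] {t x : R} (h : t * x = 1) : IsUnit x := by
  have hxt : (x * t) * (x * t) = x * t := by
    rw [mul_assoc, ← mul_assoc t, h, one_mul]
  rcases aux_idem hxt with h0 | h1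
  · exfalso
    have hx : x = 0 := by
      have hx' : x * (t * x) = (x * t) * x := by rw [mul_assoc]
      rw [h, mul_one, h0, zero_mul] at hx'
      exact hx'
    rw [hx, mul_zero] at h
    exact one_ne_zero h.symm
  · exact ⟨⟨x, t, h1, h⟩, rfl⟩

lemma aux_nonunit_mem_jacobson [IsLocalRing R] {x : R} (h : ¬ IsUnit x) :
    x ∈ Ideal.jacobson (⊥ : Ideal R) := by
  rw [Ideal.jacobson, Ideal.mem_sInf]
  rintro J ⟨-, hJ⟩
  by_contra hx
  have hxs : x ∈ Ideal.span {x} := Ideal.subset_span rfl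
  have hsup : J ⊔ Ideal.span {x} = ⊤ := by
    apply hJ.1.2
    refine lt_of_le_of_ne le_sup_left fun hEq => hx ?_
    have hmem : x ∈ J ⊔ Ideal.span {x} := Submodule.mem_sup_right hxs
    rwa [← hEq] at hmem
  have h1 : (1 : R) ∈ J ⊔ Ideal.span {x} := by rw [hsup]; exact Submodule.mem_top
  rcases Submodule.mem_sup.mp h1 with ⟨y, hy, z, hz, hyz⟩
  rcases Submodule.mem_span_singleton.mp hz with ⟨r, rfl⟩
  have hu : IsUnit (y + r • x) := by rw [hyz]; exact isUnit_one
  rcases aux_add_unit hu with h' | h'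
  · exact hJ.ne_top (J.eq_top_of_isUnit_mem hy h')
  · rw [smul_eq_mul] at h'
    rcases h' with ⟨u, hu'⟩
    refine h (aux_left_inv_isUnit (t := ↑u⁻¹ * r) ?_)
    rw [mul_assoc, ← hu', u.inv_mul]

lemma aux_unit_sub [IsLocalRing R] {x y : R} (hx : IsUnit x) (hy : ¬ IsUnit y) :
    IsUnit (x - y) := by
  rcases aux_add_unit (a := x - y) (b := y)
      (by simpa using hx) with h | h
  · exact h
  · exact absurd h hy

lemma aux_one_add [IsLocalRing R] {y : R} (hy : ¬ IsUnit y) : IsUnit (1 + y) := by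
  have := aux_unit_sub (x := (1 : R)) (y := -y) isUnit_one (by rwa [IsUnit.neg_iff])
  rwa [sub_neg_eq_add] at this

lemma aux_q_eq_zero_iff {D : Type*} [IsLocalRing R] [DivisionRing D] (q : R →+* D)
    (hker : RingHom.ker q = Ideal.jacobson (⊥ : Ideal R)) (x : R) :
    q x = 0 ↔ ¬ IsUnit x := by
  constructor
  · intro h hx
    have h2 := hx.map q
    rw [h] at h2
    exact h2.ne_zero rfl
  · intro h
    have : x ∈ RingHom.ker q := by rw [hker]; exact aux_nonunit_mem_jacobson h
    exact RingHom.mem_ker.mp this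

end LocalAux

section CompAux

variable {A : Type*} [Ring A]

open LinearMap

/-- A composite `N → M → N` through a non-isomorphic module `M` with local
endomorphism ring is a non-unit. -/
lemma aux_comp_nonunit {M N : Type*} [AddCommGroup M] [AddCommGroup N]
    [Module A M] [Module A N]
    (hM : IsLocalRing (Module.End A M)) (hN : Nontrivial (Module.End A N))
    (hne : IsEmpty (N ≃ₗ[A] M)) (u : N →ₗ[A] M) (v : M →ₗ[A] N) :
    ¬ IsUnit (v ∘ₗ u : Module.End A N) := by
  haveI := hM
  intro h
  rcases h with ⟨w, hw⟩
  set w' : Module.End A N := ↑w⁻¹ with hw'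
  have hw'w : ∀ z : N, w' ((v ∘ₗ u) z) = z := by
    intro z
    have : (w' * ↑w) z = z := by rw [w.inv_mul]; rfl
    rwa [hw] at this
  have hww' : ∀ z : N, (v ∘ₗ u) (w' z) = z := by
    intro z
    have : ((↑w : Module.End A N) * w') z = z := by rw [w.mul_inv]; rfl
    rwa [hw] at this
  set e : Module.End A M := u ∘ₗ w' ∘ₗ v with he
  have hee : e * e = e := by
    apply LinearMap.ext
    intro m
    show (u ∘ₗ w' ∘ₗ v) ((u ∘ₗ w' ∘ₗ v) m) = (u ∘ₗ w' ∘ₗ v) m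
    simp only [LinearMap.comp_apply]
    congr 1
    exact hw'w (w' (v m))
  rcases aux_idem hee with h0 | h1
  · have hu0 : u = 0 := by
      apply LinearMap.ext
      intro n
      have h2 : e (u n) = u n := by
        show (u ∘ₗ w' ∘ₗ v) (u n) = u n
        simp only [LinearMap.comp_apply]
        congr 1
        exact hw'w n
      rw [h0] at h2
      simpa using h2.symm
    have hw0 : (↑w : Module.End A N) = 0 := by rw [hw, hu0, LinearMap.comp_zero]
    exact w.ne_zero hw0
  · have h1' : u ∘ₗ (w' ∘ₗ v) = LinearMap.id := by
      rw [← he, h1]; rfl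
    have h2' : (w' ∘ₗ v) ∘ₗ u = LinearMap.id := by
      apply LinearMap.ext
      intro n
      show w' ((v ∘ₗ u) n) = n
      exact hw'w n
    exact hne.false (LinearEquiv.ofLinear u (w' ∘ₗ v) h1' h2')

end CompAux

section BlockAux

variable {A : Type*} [Ring A]

open LinearMap

lemma aux_block_isUnit {M P : Type*} [AddCommGroup M] [AddCommGroup P]
    [Module A M] [Module A P]
    (g : Module.End A (M × P)) (a' : Module.End A M)
    (ha1 : (fst A M P ∘ₗ g ∘ₗ inl A M P) ∘ₗ a' = LinearMap.id)
    (ha2 : a' ∘ₗ (fst A M P ∘ₗ g ∘ₗ inl A M P) = LinearMap.id)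
    (he : IsUnit ((snd A M P ∘ₗ g ∘ₗ inr A M P) -
      ((snd A M P ∘ₗ g ∘ₗ inl A M P) ∘ₗ a') ∘ₗ (fst A M P ∘ₗ g ∘ₗ inr A M P))) :
    IsUnit g := by
  set a : M →ₗ[A] M := fst A M P ∘ₗ g ∘ₗ inl A M P with hadef
  set b : P →ₗ[A] M := fst A M P ∘ₗ g ∘ₗ inr A M P with hbdef
  set c : M →ₗ[A] P := snd A M P ∘ₗ g ∘ₗ inl A M P with hcdef
  set d : P →ₗ[A] P := snd A M P ∘ₗ g ∘ₗ inr A M P with hddef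
  set ε : P →ₗ[A] P := d - (c ∘ₗ a') ∘ₗ b with hεdef
  have ha1' : ∀ m, a (a' m) = m := fun m => by
    have := LinearMap.congr_fun ha1 m
    simpa using this
  have ha2' : ∀ m, a' (a m) = m := fun m => by
    have := LinearMap.congr_fun ha2 m
    simpa using this
  obtain ⟨w, hw⟩ := he
  set ε' : Module.End A P := ↑w⁻¹ with hε'def
  have hε1 : ∀ p, ε (ε' p) = p := fun p => by
    have h2 : ((↑w : Module.End A P) * ε') p = p := by rw [w.mul_inv]; rfl
    rwa [hw] at h2
  have hε2 : ∀ p, ε' (ε p) = p := fun p => by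
    have h2 : (ε' * (↑w : Module.End A P)) p = p := by rw [w.inv_mul]; rfl
    rwa [hw] at h2
  set ν : Module.End A (M × P) := inr A M P ∘ₗ (c ∘ₗ a') ∘ₗ fst A M P with hνdef
  set μ : Module.End A (M × P) := inl A M P ∘ₗ (a' ∘ₗ b) ∘ₗ snd A M P with hμdef
  have hν : ν * ν = 0 := by
    apply LinearMap.ext
    intro x
    show ν (ν x) = 0
    simp [hνdef]
  have hμ : μ * μ = 0 := by
    apply LinearMap.ext
    intro x
    show μ (μ x) = 0
    simp [hμdef]
  have expand1 : ∀ x : Module.End A (M × P), x * x = 0 → (1 + x) * (1 - x) = 1 := by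
    intro x hx
    have h2 : (1 + x) * (1 - x) = 1 - x * x := by
      simp only [add_mul, sub_mul, mul_add, mul_sub, one_mul, mul_one]; abel
    rw [h2, hx, sub_zero]
  have expand2 : ∀ x : Module.End A (M × P), x * x = 0 → (1 - x) * (1 + x) = 1 := by
    intro x hx
    have h2 : (1 - x) * (1 + x) = 1 - x * x := by
      simp only [add_mul, sub_mul, mul_add, mul_sub, one_mul, mul_one]; abel
    rw [h2, hx, sub_zero]
  have hL : IsUnit (1 + ν) := ⟨⟨1 + ν, 1 - ν, expand1 ν hν, expand2 ν hν⟩, rfl⟩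
  have hU : IsUnit (1 + μ) := ⟨⟨1 + μ, 1 - μ, expand1 μ hμ, expand2 μ hμ⟩, rfl⟩
  have hΔ : IsUnit (LinearMap.prodMap a ε) := by
    refine ⟨⟨LinearMap.prodMap a ε, LinearMap.prodMap a' ε', ?_, ?_⟩, rfl⟩
    · apply LinearMap.ext
      intro x
      show LinearMap.prodMap a ε (LinearMap.prodMap a' ε' x) = x
      simp [ha1', hε1]
    · apply LinearMap.ext
      intro x
      show LinearMap.prodMap a' ε' (LinearMap.prodMap a ε x) = x
      simp [ha2', hε2]
  have hfact : g = (1 + ν) * (LinearMap.prodMap a ε) * (1 + μ) := by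
    apply LinearMap.ext
    intro x
    have hgx : g x = (a x.1 + b x.2, c x.1 + d x.2) := by
      have hx : (x.1, (0 : P)) + ((0 : M), x.2) = x := by simp
      calc g x = g ((x.1, (0 : P)) + ((0 : M), x.2)) := by rw [hx]
        _ = g (x.1, (0 : P)) + g ((0 : M), x.2) := map_add _ _ _
        _ = (a x.1 + b x.2, c x.1 + d x.2) := rfl
    rw [hgx]
    show _ = ((1 + ν) * (LinearMap.prodMap a ε) * (1 + μ)) x
    simp only [Module.End.mul_apply, LinearMap.add_apply, Module.End.one_apply,
      hνdef, hμdef, hεdef, LinearMap.comp_apply, LinearMap.prodMap_apply,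
      LinearMap.inl_apply, LinearMap.inr_apply, LinearMap.fst_apply,
      LinearMap.snd_apply, LinearMap.sub_apply, Prod.fst_add, Prod.snd_add,
      Prod.mk_add_mk, map_add, ha1', ha2']
    refine Prod.ext ?_ ?_ <;> simp <;> abel
  rw [hfact]
  exact (hL.mul hΔ).mul hU

end BlockAux

section KeyAux

universe v

variable {A : Type*} [Ring A]

open LinearMap

lemma aux_cons_single_zero {n : ℕ} {N : Fin (n + 1) → Type*} [∀ j, Zero (N j)] (m : N 0) :
    (Fin.cons m (0 : ∀ j : Fin n, N j.succ) : ∀ j, N j) = Pi.single (0 : Fin (n + 1)) m := by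
  funext i
  refine Fin.cases ?_ (fun i => ?_) i
  · rw [Fin.cons_zero, Pi.single_eq_same]
  · rw [Fin.cons_succ, Pi.single_eq_of_ne (Fin.succ_ne_zero i)]
    rfl

lemma aux_cons_single_succ {n : ℕ} {N : Fin (n + 1) → Type*} [∀ j, Zero (N j)] (j : Fin n)
    (x : N j.succ) :
    (Fin.cons (0 : N 0) (Pi.single j x : ∀ i : Fin n, N i.succ) : ∀ i, N i) =
      Pi.single j.succ x := by
  funext i
  refine Fin.cases ?_ (fun i => ?_) i
  · rw [Fin.cons_zero, Pi.single_eq_of_ne (Fin.succ_ne_zero j).symm]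
  · rw [Fin.cons_succ]
    by_cases h : i = j
    · subst h; rw [Pi.single_eq_same, Pi.single_eq_same]
    · rw [Pi.single_eq_of_ne h, Pi.single_eq_of_ne (fun hs => h (Fin.succ_injective _ hs))]

lemma aux_keyUnit :
    ∀ (s : ℕ) (N : Fin s → Type v) [∀ j, AddCommGroup (N j)] [∀ j, Module A (N j)],
    (∀ j, IsLocalRing (Module.End A (N j))) →
    (∀ i j, i ≠ j → IsEmpty (N i ≃ₗ[A] N j)) →
    ∀ g : Module.End A (∀ j, N j),
    (∀ j, IsUnit (LinearMap.proj j ∘ₗ (g : (∀ i, N i) →ₗ[A] (∀ i, N i)) ∘ₗ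
      LinearMap.single A N j : Module.End A (N j))) →
    IsUnit g := by
  intro s
  induction s with
  | zero =>
    intro N _ _ _ _ g _
    haveI : Subsingleton (∀ j : Fin 0, N j) := ⟨fun a b => funext fun j => j.elim0⟩
    haveI : Subsingleton (Module.End A (∀ j : Fin 0, N j)) :=
      ⟨fun f g' => LinearMap.ext fun x => Subsingleton.elim _ _⟩
    exact isUnit_of_subsingleton g
  | succ n IH =>
    intro N instAG instMod hloc hpair g hdiag
    let P := ∀ j : Fin n, N j.succ
    let E : (∀ j : Fin (n + 1), N j) ≃ₗ[A] (N 0 × P) :=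
      { toFun := fun x => (x 0, fun j => x j.succ)
        map_add' := fun x y => rfl
        map_smul' := fun r x => rfl
        invFun := fun p => Fin.cons p.1 p.2
        left_inv := fun x => Fin.cons_self_tail x
        right_inv := fun p => by
          refine Prod.ext ?_ ?_
          · show (Fin.cons p.1 p.2 : ∀ j : Fin (n + 1), N j) 0 = p.1
            exact Fin.cons_zero _ _
          · show (fun j : Fin n => (Fin.cons p.1 p.2 : ∀ j : Fin (n + 1), N j) j.succ) = p.2
            funext j; exact Fin.cons_succ _ _ _ }
    set g' : Module.End A (N 0 × P) := E.toLinearMap ∘ₗ (g : _) ∘ₗ E.symm.toLinearMap with hg'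
    have ha_eq : (fst A (N 0) P ∘ₗ g' ∘ₗ inl A (N 0) P) =
        (proj 0 ∘ₗ (g : (∀ i, N i) →ₗ[A] (∀ i, N i)) ∘ₗ single A N 0) := by
      apply LinearMap.ext
      intro m
      show (E (g (E.symm (m, (0 : P))))).1 = (g (Pi.single 0 m)) 0
      have h3 : E.symm (m, (0 : P)) = Pi.single (0 : Fin (n + 1)) m := aux_cons_single_zero m
      rw [h3]
      rfl
    obtain ⟨ua, hua⟩ := hdiag 0
    have ha1 : (fst A (N 0) P ∘ₗ g' ∘ₗ inl A (N 0) P) ∘ₗ (↑ua⁻¹ : Module.End A (N 0)) =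
        LinearMap.id := by
      rw [ha_eq, ← hua]
      exact ua.mul_inv
    have ha2 : (↑ua⁻¹ : Module.End A (N 0)) ∘ₗ (fst A (N 0) P ∘ₗ g' ∘ₗ inl A (N 0) P) =
        LinearMap.id := by
      rw [ha_eq, ← hua]
      exact ua.inv_mul
    set σ : Module.End A P := (snd A (N 0) P ∘ₗ g' ∘ₗ inr A (N 0) P) -
        ((snd A (N 0) P ∘ₗ g' ∘ₗ inl A (N 0) P) ∘ₗ (↑ua⁻¹ : Module.End A (N 0))) ∘ₗ
        (fst A (N 0) P ∘ₗ g' ∘ₗ inr A (N 0) P) with hσ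
    have hσdiag : ∀ j : Fin n,
        IsUnit (proj j ∘ₗ (σ : P →ₗ[A] P) ∘ₗ single A (fun i : Fin n => N i.succ) j :
          Module.End A (N j.succ)) := by
      intro j
      haveI := hloc j.succ
      set u : N j.succ →ₗ[A] N 0 := (↑ua⁻¹ : Module.End A (N 0)) ∘ₗ
        ((fst A (N 0) P ∘ₗ g' ∘ₗ inr A (N 0) P) ∘ₗ
          single A (fun i : Fin n => N i.succ) j) with hu
      set v : N 0 →ₗ[A] N j.succ := proj j ∘ₗ (snd A (N 0) P ∘ₗ g' ∘ₗ inl A (N 0) P) with hv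
      have hXY : (proj j ∘ₗ (σ : P →ₗ[A] P) ∘ₗ single A (fun i : Fin n => N i.succ) j) =
          (proj j.succ ∘ₗ (g : (∀ i, N i) →ₗ[A] (∀ i, N i)) ∘ₗ single A N j.succ) -
            (v ∘ₗ u) := by
        apply LinearMap.ext
        intro x
        simp only [LinearMap.comp_apply, LinearMap.sub_apply, map_sub, hσ]
        congr 1
        · show (E (g (E.symm ((0 : N 0), (Pi.single j x : P))))).2 j =
            (g (Pi.single j.succ x)) j.succ
          have h3 : E.symm ((0 : N 0), (Pi.single j x : P)) = Pi.single j.succ x :=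
            aux_cons_single_succ j x
          rw [h3]
          rfl
      rw [hXY]
      refine aux_unit_sub (hdiag j.succ) ?_
      exact aux_comp_nonunit (hloc 0) (by infer_instance)
        (hpair j.succ 0 (Fin.succ_ne_zero j)) u v
    have hσunit : IsUnit σ :=
      IH (fun i => N i.succ) (fun i => hloc i.succ)
        (fun i j hij => hpair i.succ j.succ (fun h => hij (Fin.succ_injective _ h))) σ hσdiag
    have hg'unit : IsUnit g' := aux_block_isUnit g' (↑ua⁻¹) ha1 ha2 (hσ ▸ hσunit)
    rcases hg'unit with ⟨w, hw⟩
    set k : Module.End A (∀ j, N j) :=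
      E.symm.toLinearMap ∘ₗ (↑w⁻¹ : Module.End A (N 0 × P)) ∘ₗ E.toLinearMap with hk
    have h1 : ∀ z, g' ((↑w⁻¹ : Module.End A (N 0 × P)) z) = z := fun z => by
      have h2 : ((↑w : Module.End A (N 0 × P)) * ↑w⁻¹) z = z := by rw [w.mul_inv]; rfl
      rwa [hw] at h2
    have h1' : ∀ z, (↑w⁻¹ : Module.End A (N 0 × P)) (g' z) = z := fun z => by
      have h2 : ((↑w⁻¹ : Module.End A (N 0 × P)) * ↑w) z = z := by rw [w.inv_mul]; rfl
      rwa [hw] at h2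
    refine ⟨⟨g, k, ?_, ?_⟩, rfl⟩
    · apply LinearMap.ext
      intro x
      show g (k x) = x
      apply E.injective
      calc E (g (k x)) = g' ((↑w⁻¹ : Module.End A (N 0 × P)) (E x)) := by
            show E (g (E.symm ((↑w⁻¹ : Module.End A (N 0 × P)) (E x)))) = _
            rfl
        _ = E x := h1 (E x)
    · apply LinearMap.ext
      intro x
      show k (g x) = x
      have h4 : g' (E x) = E (g x) := by
        show E (g (E.symm (E x))) = E (g x)
        rw [E.symm_apply_apply]
      calc k (g x) = E.symm ((↑w⁻¹ : Module.End A (N 0 × P)) (E (g x))) := rfl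
        _ = E.symm ((↑w⁻¹ : Module.End A (N 0 × P)) (g' (E x))) := by rw [h4]
        _ = E.symm (E x) := by rw [h1' (E x)]
        _ = x := E.symm_apply_apply x

end KeyAux

section DiagMul

variable {A : Type*} [Ring A]

open LinearMap

lemma aux_diag_mul {s : ℕ} (N : Fin s → Type*) [∀ j, AddCommGroup (N j)]
    [∀ j, Module A (N j)] (f g : Module.End A (∀ j, N j)) (j : Fin s) :
    (LinearMap.proj j ∘ₗ ((f * g : Module.End A (∀ j, N j)) :
        (∀ i, N i) →ₗ[A] (∀ i, N i)) ∘ₗ LinearMap.single A N j) =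
      ∑ i : Fin s, (LinearMap.proj j ∘ₗ (f : (∀ i, N i) →ₗ[A] (∀ i, N i)) ∘ₗ
          LinearMap.single A N i) ∘ₗ
        (LinearMap.proj i ∘ₗ (g : (∀ i, N i) →ₗ[A] (∀ i, N i)) ∘ₗ LinearMap.single A N j) := by
  apply LinearMap.ext
  intro x
  show (f (g (Pi.single j x))) j = _
  conv_lhs => rw [show g (Pi.single j x) = ∑ i, Pi.single i ((g (Pi.single j x)) i) from
    (Finset.univ_sum_single _).symm]
  rw [map_sum, Finset.sum_apply]
  simp only [LinearMap.sum_apply, LinearMap.comp_apply, LinearMap.proj_apply]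
  rfl

end DiagMul



/-- With `N = N 1 ⊕ ⋯ ⊕ N s` as usual (the `N j` pairwise
non-isomorphic with local endomorphism rings, `𝔪 j` the Jacobson radical of
`End_A (N j)` and `D j = End_A (N j) / 𝔪 j` the residue division ring, here
presented by surjective ring homomorphisms `q j` with kernel the Jacobson
radical), the map `E → D 1 × ⋯ × D s` sending `f` to the tuple of classes of
its diagonal components is a surjective ring homomorphism whose kernel is the
Jacobson radical of `E = End_A N`; in particular `E` modulo its Jacobson
radical is a product of division rings, i.e. `E` is semilocal. -/
theorem stmt1 {A : Type*} [Ring A] {s : ℕ} (N : Fin s → Type*)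
    [∀ j, AddCommGroup (N j)] [∀ j, Module A (N j)]
    (hloc : ∀ j, IsLocalRing (Module.End A (N j)))
    (hpair : ∀ i j, i ≠ j → IsEmpty (N i ≃ₗ[A] N j))
    (D : Fin s → Type*) [∀ j, DivisionRing (D j)]
    (q : ∀ j, Module.End A (N j) →+* D j)
    (hq : ∀ j, Function.Surjective (q j))
    (hker : ∀ j, RingHom.ker (q j) = Ideal.jacobson (⊥ : Ideal (Module.End A (N j)))) :
    ∃ Φ : Module.End A (∀ j, N j) →+* (∀ j, D j),
      (∀ (f : Module.End A (∀ j, N j)) (j : Fin s),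
          Φ f j = q j ((LinearMap.proj j) ∘ₗ
            (f : (∀ i, N i) →ₗ[A] (∀ i, N i)) ∘ₗ (LinearMap.single A N j))) ∧
      Function.Surjective Φ ∧
      RingHom.ker Φ = Ideal.jacobson (⊥ : Ideal (Module.End A (∀ j, N j))) := by
  classical
  set Φfun : Module.End A (∀ j, N j) → ∀ j, D j := fun f j =>
    q j ((LinearMap.proj j) ∘ₗ (f : (∀ i, N i) →ₗ[A] (∀ i, N i)) ∘ₗ
      (LinearMap.single A N j)) with hΦfun
  have hdiag_one : ∀ j : Fin s, (LinearMap.proj j ∘ₗ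
      ((1 : Module.End A (∀ j, N j)) : (∀ i, N i) →ₗ[A] (∀ i, N i)) ∘ₗ
      LinearMap.single A N j) = (1 : Module.End A (N j)) := by
    intro j
    apply LinearMap.ext
    intro x
    show (Pi.single j x : ∀ i, N i) j = x
    exact Pi.single_eq_same j x
  have hmul : ∀ f g, Φfun (f * g) = Φfun f * Φfun g := by
    intro f g
    funext j
    haveI := hloc j
    show q j _ = q j _ * q j _
    rw [aux_diag_mul, map_sum]
    have hsum : (∑ i : Fin s, q j ((LinearMap.proj j ∘ₗ
          (f : (∀ i, N i) →ₗ[A] (∀ i, N i)) ∘ₗ LinearMap.single A N i) ∘ₗ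
          (LinearMap.proj i ∘ₗ (g : (∀ i, N i) →ₗ[A] (∀ i, N i)) ∘ₗ
          LinearMap.single A N j))) =
        q j ((LinearMap.proj j ∘ₗ (f : (∀ i, N i) →ₗ[A] (∀ i, N i)) ∘ₗ
          LinearMap.single A N j) ∘ₗ
          (LinearMap.proj j ∘ₗ (g : (∀ i, N i) →ₗ[A] (∀ i, N i)) ∘ₗ
          LinearMap.single A N j)) := by
      refine Finset.sum_eq_single j ?_ ?_
      · intro i _ hij
        rw [aux_q_eq_zero_iff (q j) (hker j)]
        exact aux_comp_nonunit (hloc i) (by haveI := hloc j; infer_instance)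
          (hpair j i (Ne.symm hij)) _ _
      · intro hj
        exact absurd (Finset.mem_univ j) hj
    rw [hsum]
    exact map_mul (q j) _ _
  have hone : Φfun 1 = 1 := by
    funext j
    show q j _ = 1
    rw [hdiag_one j, map_one]
  have hzero : Φfun 0 = 0 := by
    funext j
    show q j _ = 0
    have h0 : (LinearMap.proj j ∘ₗ ((0 : Module.End A (∀ j, N j)) :
        (∀ i, N i) →ₗ[A] (∀ i, N i)) ∘ₗ LinearMap.single A N j) = 0 := by
      apply LinearMap.ext; intro x; rfl
    rw [h0, map_zero]
  have hadd : ∀ f g, Φfun (f + g) = Φfun f + Φfun g := by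
    intro f g
    funext j
    show q j _ = q j _ + q j _
    have h0 : (LinearMap.proj j ∘ₗ ((f + g : Module.End A (∀ j, N j)) :
        (∀ i, N i) →ₗ[A] (∀ i, N i)) ∘ₗ LinearMap.single A N j) =
        (LinearMap.proj j ∘ₗ (f : (∀ i, N i) →ₗ[A] (∀ i, N i)) ∘ₗ
          LinearMap.single A N j) +
        (LinearMap.proj j ∘ₗ (g : (∀ i, N i) →ₗ[A] (∀ i, N i)) ∘ₗ
          LinearMap.single A N j) := by
      apply LinearMap.ext; intro x; rfl
    rw [h0, map_add]
  set Φ : Module.End A (∀ j, N j) →+* (∀ j, D j) :=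
    { toFun := Φfun, map_one' := hone, map_mul' := hmul, map_zero' := hzero,
      map_add' := hadd } with hΦ
  have hsurj : Function.Surjective Φ := by
    intro dd
    choose gg hgg using fun j => hq j (dd j)
    refine ⟨LinearMap.pi (fun i => gg i ∘ₗ LinearMap.proj i), ?_⟩
    funext j
    show q j _ = dd j
    have h0 : (LinearMap.proj j ∘ₗ ((LinearMap.pi (fun i => gg i ∘ₗ LinearMap.proj i) :
        Module.End A (∀ j, N j)) : (∀ i, N i) →ₗ[A] (∀ i, N i)) ∘ₗ
        LinearMap.single A N j) = gg j := by
      apply LinearMap.ext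
      intro x
      show gg j ((Pi.single j x : ∀ i, N i) j) = gg j x
      rw [Pi.single_eq_same]
    rw [h0]
    exact hgg j
  refine ⟨Φ, fun f j => rfl, hsurj, ?_⟩
  apply le_antisymm
  · intro f hf
    have hf0 : Φfun f = 0 := RingHom.mem_ker.mp hf
    rw [Ideal.mem_jacobson_iff]
    intro y
    have hyf : Φfun (y * f) = 0 := by
      rw [hmul, hf0, mul_zero]
    have hunit : IsUnit (1 + y * f) := by
      apply aux_keyUnit _ N hloc hpair
      intro j
      haveI := hloc j
      have hsplit : (LinearMap.proj j ∘ₗ ((1 + y * f : Module.End A (∀ j, N j)) :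
          (∀ i, N i) →ₗ[A] (∀ i, N i)) ∘ₗ LinearMap.single A N j) =
          (1 : Module.End A (N j)) + (LinearMap.proj j ∘ₗ
            ((y * f : Module.End A (∀ j, N j)) : (∀ i, N i) →ₗ[A] (∀ i, N i)) ∘ₗ
            LinearMap.single A N j) := by
        apply LinearMap.ext
        intro x
        show (Pi.single j x : ∀ i, N i) j + ((y * f) (Pi.single j x)) j = _
        rw [Pi.single_eq_same]
        rfl
      rw [hsplit]
      refine aux_one_add ?_
      rw [← aux_q_eq_zero_iff (q j) (hker j)]
      exact congrFun hyf j
    refine ⟨↑hunit.unit⁻¹, ?_⟩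
    have h5 := hunit.unit.inv_mul
    rw [hunit.unit_spec] at h5
    have h6 : (↑hunit.unit⁻¹ : Module.End A (∀ j, N j)) * y * f + ↑hunit.unit⁻¹ =
        (↑hunit.unit⁻¹ : Module.End A (∀ j, N j)) * (1 + y * f) := by
      rw [mul_add, mul_one, mul_assoc, add_comm]
    rw [Submodule.mem_bot, sub_eq_zero, h6, h5]
  · intro f hf
    show f ∈ RingHom.ker Φ
    rw [RingHom.mem_ker]
    funext j
    set ψ : Module.End A (∀ j, N j) →+* D j := (Pi.evalRingHom D j).comp Φ with hψ
    have hψs : Function.Surjective ψ := by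
      intro c
      obtain ⟨f0, hf0⟩ := hsurj (Pi.single j c)
      refine ⟨f0, ?_⟩
      show Φ f0 j = c
      rw [hf0, Pi.single_eq_same]
    have hmax : (RingHom.ker ψ).IsMaximal := by
      rw [Ideal.isMaximal_iff]
      constructor
      · intro h1
        have h2 := RingHom.mem_ker.mp h1
        rw [map_one] at h2
        exact one_ne_zero h2
      · intro J x hIJ hxI hxJ
        have hx0 : ψ x ≠ 0 := fun h0 => hxI (RingHom.mem_ker.mpr h0)
        obtain ⟨y, hy⟩ := hψs (ψ x)⁻¹
        have hk : 1 - y * x ∈ RingHom.ker ψ := by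
          rw [RingHom.mem_ker, map_sub, map_one, map_mul, hy, inv_mul_cancel₀ hx0,
            sub_self]
        have h6 : (1 - y * x) + y * x ∈ J := J.add_mem (hIJ hk) (J.mul_mem_left y hxJ)
        have h7 : (1 - y * x) + y * x = 1 := by abel
        rwa [h7] at h6
    have hfj : f ∈ RingHom.ker ψ := by
      rw [Ideal.jacobson] at hf
      exact Ideal.mem_sInf.mp hf ⟨bot_le, hmax⟩
    exact RingHom.mem_ker.mp hfj
end

section
/- Let A be a (possibly noncommutative) ring with identity and let N_1, …, N_s be pairwise non-isomorphic left A-modules, each having a local endomorphism ring. Set N = N_1 ⊕ ⋯ ⊕ N_s and E = End_A(N). Then f ∈ E admits a left inverse in E (i.e., there exists g ∈ E with g ∘ f = id_N) if and only if for every j ∈ {1, …, s} the diagonal component π_j ∘ f ∘ ι_j admits a left inverse in End_A(N_j), where ι_j : N_j → N and π_j : N → N_j denote the canonical inclusion and projection of the j-th summand. -/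
/-!
If `g * f = 1`, the `(j, j)` component gives `1 = ∑ i, g j i ∘ f i j` in the local ring
`End (N j)`, so some `g j i ∘ f i j` is a unit. Then `f i j ∘ (g j i ∘ f i j)⁻¹ ∘ g j i` is a
nonzero idempotent of the local ring `End (N i)`, hence `1`, so `N j ≅ N i` and `i = j`.

Conversely, a left invertible element of a local ring is a unit, and `f` is bijective as soon as
all `f j j` are units, by induction on `s`: write `f = [a b; c d]` on `N 0 × ∏_{j > 0} N j` with
`a = f 0 0`. The diagonal components of the Schur complement `S = d - c a⁻¹ b` are
`f j j - c j a⁻¹ b j`, where the correction term factors through `N 0 ≇ N j` and so is not a unit.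
Hence `S` is bijective by induction, and so is `f = [1 0; c a⁻¹ 1] [a 0; 0 S] [1 a⁻¹ b; 0 1]`.
-/

open LinearMap
open Function (Bijective bijective_iff_has_inverse)

namespace IsLocalRing

variable {R : Type*} [Ring R] [IsLocalRing R]

theorem eq_zero_or_one_of_isIdempotentElem {e : R} (he : IsIdempotentElem e) :
    e = 0 ∨ e = 1 := by
  rcases isUnit_or_isUnit_of_add_one (add_sub_cancel e 1) with h | h
  · exact .inr (h.mul_left_cancel (he.eq.trans (mul_one e).symm))
  · exact .inl (h.mul_right_eq_zero.mp (by rw [sub_mul, one_mul, he.eq, sub_self]))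

theorem isUnit_of_mul_eq_one {a b : R} (h : b * a = 1) : IsUnit a := by
  have hab : IsIdempotentElem (a * b) := by
    rw [IsIdempotentElem, mul_assoc, ← mul_assoc b, h, one_mul]
  rcases eq_zero_or_one_of_isIdempotentElem hab with h0 | h1
  · refine absurd ?_ (one_ne_zero (α := R))
    calc (1 : R) = (b * a) * (b * a) := by rw [h, one_mul]
      _ = b * (a * b) * a := by simp only [mul_assoc]
      _ = 0 := by rw [h0, mul_zero, zero_mul]
  · exact ⟨⟨a, b, h1, h⟩, rfl⟩

theorem isUnit_sub_of_not_isUnit {a b : R} (ha : IsUnit a) (hb : ¬IsUnit b) : IsUnit (a - b) :=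
  (isUnit_or_isUnit_of_isUnit_add (by rwa [sub_add_cancel])).resolve_right hb

end IsLocalRing

namespace Module.End

variable {A : Type*} [Semiring A] {ι : Type*} [DecidableEq ι] {N : ι → Type*}
  [∀ i, AddCommMonoid (N i)] [∀ i, Module A (N i)]

def component (f : Module.End A (∀ i, N i)) (i j : ι) : N j →ₗ[A] N i :=
  proj i ∘ₗ f ∘ₗ single A N j

@[simp]
theorem component_apply (f : Module.End A (∀ i, N i)) (i j : ι) (x : N j) :
    f.component i j x = f (Pi.single j x) i :=
  rfl

theorem one_component_self (j : ι) : (1 : Module.End A (∀ i, N i)).component j j = 1 :=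
  proj_comp_single_same A N j

theorem component_mul [Fintype ι] (g f : Module.End A (∀ i, N i)) (k j : ι) :
    (g * f).component k j = ∑ i, g.component k i ∘ₗ f.component i j := by
  ext x
  simp only [component_apply, Module.End.mul_apply, LinearMap.sum_apply, comp_apply]
  rw [← Finset.sum_apply, ← map_sum, Finset.univ_sum_single]

end Module.End

section

variable {A : Type*} [Semiring A] {s : ℕ} {N : Fin (s + 1) → Type*} [∀ i, AddCommMonoid (N i)]
  [∀ i, Module A (N i)]

theorem Fin.consLinearEquiv_apply_zero_right (m : N 0) :
    Fin.consLinearEquiv A N (m, 0) = Pi.single 0 m := by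
  ext i
  refine Fin.cases ?_ ?_ i <;> simp

theorem Fin.consLinearEquiv_apply_zero_single (j : Fin s) (x : N j.succ) :
    Fin.consLinearEquiv A N (0, Pi.single j x) = Pi.single j.succ x := by
  ext i
  refine Fin.cases ?_ (fun i => ?_) i
  · simp
  · rcases eq_or_ne i j with rfl | h
    · simp
    · simp [h]

end

section

variable {A : Type*} [Ring A] {M P Q : Type*} [AddCommGroup M] [AddCommGroup P] [AddCommGroup Q]
  [Module A M] [Module A P] [Module A Q]

theorem LinearMap.nonempty_linearEquiv_of_isUnit_comp [IsLocalRing (Module.End A M)]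
    [Nontrivial (Module.End A P)] {φ : P →ₗ[A] M} {ψ : M →ₗ[A] P}
    (h : IsUnit (ψ ∘ₗ φ : Module.End A P)) : Nonempty (P ≃ₗ[A] M) := by
  obtain ⟨u, hu⟩ := h
  set ρ := (↑u⁻¹ : Module.End A P) ∘ₗ ψ
  have hρφ : ρ ∘ₗ φ = LinearMap.id := by
    rw [comp_assoc, ← hu, ← Module.End.mul_eq_comp, u.inv_mul]; rfl
  have hφρ : (φ ∘ₗ ρ) ∘ₗ (φ ∘ₗ ρ) = φ ∘ₗ ρ := by
    rw [comp_assoc, ← comp_assoc ρ, hρφ, id_comp]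
  rcases IsLocalRing.eq_zero_or_one_of_isIdempotentElem (e := φ ∘ₗ ρ) hφρ with h0 | h1
  · refine absurd ?_ u.ne_zero
    calc (u : Module.End A P) = ψ ∘ₗ (φ ∘ₗ ρ) ∘ₗ φ := by
          rw [hu, comp_assoc, hρφ, comp_id]
      _ = 0 := by rw [h0, zero_comp, comp_zero]
  · exact ⟨.ofLinearMap φ ρ h1 hρφ⟩

theorem LinearMap.bijective_of_bijective_schurComplement (f : Module.End A (P × Q))
    (a' : Module.End A P) (h₁ : a' ∘ₗ (fst A P Q ∘ₗ f ∘ₗ inl A P Q) = id)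
    (h₂ : (fst A P Q ∘ₗ f ∘ₗ inl A P Q) ∘ₗ a' = id)
    (hS : Bijective ⇑(snd A P Q ∘ₗ f ∘ₗ inr A P Q -
      (snd A P Q ∘ₗ f ∘ₗ inl A P Q) ∘ₗ a' ∘ₗ (fst A P Q ∘ₗ f ∘ₗ inr A P Q))) :
    Bijective f := by
  set a := fst A P Q ∘ₗ f ∘ₗ inl A P Q
  set b := fst A P Q ∘ₗ f ∘ₗ inr A P Q
  set c := snd A P Q ∘ₗ f ∘ₗ inl A P Q
  set d := snd A P Q ∘ₗ f ∘ₗ inr A P Q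
  set S := d - c ∘ₗ a' ∘ₗ b with hS_def
  have ha'a (x : P) : a' (a x) = x := LinearMap.congr_fun h₁ x
  have haa' (x : P) : a (a' x) = x := LinearMap.congr_fun h₂ x
  have hf (x : P) (y : Q) : f (x, y) = (a x + b y, c x + d y) := by
    rw [show ((x, y) : P × Q) = inl A P Q x + inr A P Q y by simp, map_add]; rfl
  let U : P × Q → P × Q := fun q => (q.1 + a' (b q.2), q.2)
  let L : P × Q → P × Q := fun q => (q.1, q.2 + c (a' q.1))
  have hU : Bijective U := bijective_iff_has_inverse.mpr
    ⟨fun q => (q.1 - a' (b q.2), q.2), fun q => by simp [U], fun q => by simp [U]⟩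
  have hL : Bijective L := bijective_iff_has_inverse.mpr
    ⟨fun q => (q.1, q.2 - c (a' q.1)), fun q => by simp [L], fun q => by simp [L]⟩
  have hLDU : ⇑f = L ∘ Prod.map a S ∘ U := by
    funext ⟨x, y⟩
    change f (x, y) = (a (x + a' (b y)), S y + c (a' (a (x + a' (b y)))))
    rw [hf, ha'a, map_add a, haa', hS_def, sub_apply, map_add c]
    simp only [LinearMap.comp_apply]
    congr 1
    abel
  rw [hLDU]
  exact hL.comp ((bijective_iff_has_inverse.mpr ⟨a', ha'a, haa'⟩).prodMap hS |>.comp hU)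

end

namespace Module.End

variable {A : Type*} [Ring A]

theorem isUnit_component_comp_component_of_mul_eq_one {ι : Type*} [Fintype ι] [DecidableEq ι]
    {N : ι → Type*} [∀ i, AddCommGroup (N i)] [∀ i, Module A (N i)]
    (hloc : ∀ j, IsLocalRing (Module.End A (N j)))
    (hpair : ∀ i j, i ≠ j → IsEmpty (N i ≃ₗ[A] N j)) {g f : Module.End A (∀ i, N i)}
    (hgf : g * f = 1) (j : ι) : IsUnit (g.component j j ∘ₗ f.component j j) := by
  have := hloc j
  have hsum : ∑ i, g.component j i ∘ₗ f.component i j = 1 := by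
    rw [← component_mul, hgf, one_component_self]
  obtain ⟨i, -, hi⟩ := IsLocalRing.exists_of_isUnit_sum (hsum ▸ isUnit_one)
  obtain rfl : i = j := by
    by_contra hij
    have := hloc i
    exact (hpair j i (Ne.symm hij)).false (nonempty_linearEquiv_of_isUnit_comp hi).some
  exact hi

theorem bijective_of_isUnit_component_self {s : ℕ} {N : Fin s → Type*}
    [∀ j, AddCommGroup (N j)] [∀ j, Module A (N j)]
    (hloc : ∀ j, IsLocalRing (Module.End A (N j)))
    (hpair : ∀ i j, i ≠ j → IsEmpty (N i ≃ₗ[A] N j)) (f : Module.End A (∀ j, N j))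
    (hdiag : ∀ j, IsUnit (f.component j j)) :
    Bijective f := by
  induction s with
  | zero => exact ⟨fun x y _ => Subsingleton.elim x y, fun y => ⟨y, Subsingleton.elim _ _⟩⟩
  | succ s ih =>
    let e := Fin.consLinearEquiv A N
    let f' : Module.End A (N 0 × ∀ i : Fin s, N i.succ) :=
      e.symm.toLinearMap ∘ₗ f ∘ₗ e.toLinearMap
    set b := fst _ _ _ ∘ₗ f' ∘ₗ inr _ _ _
    set c := snd _ _ _ ∘ₗ f' ∘ₗ inl _ _ _
    set d : Module.End A (∀ i : Fin s, N i.succ) := snd _ _ _ ∘ₗ f' ∘ₗ inr _ _ _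
    have ha : fst _ _ _ ∘ₗ f' ∘ₗ inl _ _ _ = f.component 0 0 := by
      ext m; simp [f', e, Fin.consLinearEquiv_apply_zero_right]
    have hd (j : Fin s) : d.component j j = f.component j.succ j.succ := by
      ext x; simp [d, f', e, Fin.consLinearEquiv_apply_zero_single, Fin.tail]
    obtain ⟨u, hu⟩ := hdiag 0
    rw [← ha] at hu
    set S := d - c ∘ₗ ↑u⁻¹ ∘ₗ b
    have hS (j : Fin s) : IsUnit (S.component j j) := by
      have := hloc j.succ
      have := hloc 0
      -- the correction term factors through `N 0`, which is not isomorphic to `N j.succ`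
      have hcorr : ¬IsUnit ((proj j ∘ₗ c) ∘ₗ (↑u⁻¹ ∘ₗ b ∘ₗ single A _ j)) := fun h =>
        (hpair _ _ (Fin.succ_ne_zero j)).false (nonempty_linearEquiv_of_isUnit_comp h).some
      have hSj : S.component j j =
          f.component j.succ j.succ - (proj j ∘ₗ c) ∘ₗ (↑u⁻¹ ∘ₗ b ∘ₗ single A _ j) := by
        rw [← hd]; ext x; simp [S]
      rw [hSj]
      exact IsLocalRing.isUnit_sub_of_not_isUnit (hdiag j.succ) hcorr
    have hf' : Bijective f' := by
      refine bijective_of_bijective_schurComplement f' ↑u⁻¹ ?_ ?_ (ih (fun j => hloc j.succ)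
        (fun i j hij => hpair _ _ (Fin.succ_injective _ |>.ne hij)) S hS)
      · rw [← hu, ← Module.End.mul_eq_comp, u.inv_mul]; rfl
      · rw [← hu, ← Module.End.mul_eq_comp, u.mul_inv]; rfl
    have hf : ⇑f = e ∘ f' ∘ e.symm := by ext x; simp [f']
    rw [hf]
    exact e.bijective.comp (hf'.comp e.symm.bijective)

end Module.End

/-- With `N = N 1 ⊕ ⋯ ⊕ N s` (the `N j` pairwise non-isomorphic
with local endomorphism rings), an endomorphism `f` of `N` has a left inverse
in `End_A N` iff each diagonal component `π j ∘ f ∘ ι j` has a left inverse in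
`End_A (N j)`. -/
theorem stmt2 {A : Type*} [Ring A] {s : ℕ} (N : Fin s → Type*)
    [∀ j, AddCommGroup (N j)] [∀ j, Module A (N j)]
    (hloc : ∀ j, IsLocalRing (Module.End A (N j)))
    (hpair : ∀ i j, i ≠ j → IsEmpty (N i ≃ₗ[A] N j))
    (f : Module.End A (∀ j, N j)) :
    (∃ g : Module.End A (∀ j, N j), g * f = 1) ↔
      ∀ j, ∃ g : Module.End A (N j),
        g * ((LinearMap.proj j) ∘ₗ
          (f : (∀ i, N i) →ₗ[A] (∀ i, N i)) ∘ₗ (LinearMap.single A N j)) = 1 := by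
  constructor
  · rintro ⟨g, hg⟩ j
    obtain ⟨c, hc⟩ :=
      (Module.End.isUnit_component_comp_component_of_mul_eq_one hloc hpair hg j).exists_left_inv
    exact ⟨c * g.component j j, by rw [mul_assoc]; exact hc⟩
  · intro h
    have hf := Module.End.bijective_of_isUnit_component_self hloc hpair f fun j =>
      have := hloc j
      IsLocalRing.isUnit_of_mul_eq_one (h j).choose_spec
    exact ((Module.End.isUnit_iff f).mpr hf).exists_left_inv
end

section
/- Let A be a (possibly noncommutative) ring with identity and let N_1, …, N_s be pairwise non-isomorphic left A-modules, each having a local endomorphism ring with Jacobson radical 𝔪_j and residue division ring D_j = End_A(N_j)/𝔪_j. Set N = N_1 ⊕ ⋯ ⊕ N_s and E = End_A(N). Then the assignment sending an automorphism f of N to the tuple of classes ([π_j ∘ f ∘ ι_j mod 𝔪_j])_{j=1,…,s} induces a surjective group homomorphism from the abelianization (Eˣ)_ab of the unit group of E onto (D_1ˣ)_ab × ⋯ × (D_sˣ)_ab. -/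
/-!
The `(j, j)`-component of a product of endomorphisms of `N = ⊕ N i` is
`(f g)_jj = ∑ k, f_jk g_kj`. For `k ≠ j` the summand factors through `N k`; were it an
automorphism of `N j` with left inverse `c`, then `g_kj c f_jk` would be an idempotent of the local
ring `End N_k`, hence `1`, and `N j ≅ N k`. So the off-diagonal summands are nonunits, which in a
local ring lie in the Jacobson radical, and `f ↦ f_jj mod 𝔪_j` is a ring homomorphism
`End N → D j`. On units it gives the map to `(D j)ˣ`, which passes to abelianizations.
Surjectivity: units of `D j` lift to units of the local ring `End N_j`, and a family of such lifts
assembles into a diagonal automorphism of `N`.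
-/

namespace IsLocalRing

variable {R : Type*} [Ring R] [IsLocalRing R]

theorem isIdempotentElem_iff {e : R} : IsIdempotentElem e ↔ e = 0 ∨ e = 1 := by
  refine ⟨fun he => ?_, by rintro (rfl | rfl) <;> simp [IsIdempotentElem]⟩
  rcases isUnit_or_isUnit_of_add_one (add_sub_cancel e 1) with hu | hu
  · exact Or.inr ((IsIdempotentElem.iff_eq_one_of_isUnit hu).mp he)
  · exact Or.inl (sub_eq_self.mp ((IsIdempotentElem.iff_eq_one_of_isUnit hu).mp he.one_sub))

instance : IsDedekindFiniteMonoid R where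
  mul_eq_one_symm {x y} hxy := by
    have hyx : IsIdempotentElem (y * x) := by
      rw [IsIdempotentElem, mul_assoc, ← mul_assoc x, hxy, one_mul]
    refine (isIdempotentElem_iff.mp hyx).resolve_left fun h0 => one_ne_zero (α := R) ?_
    calc (1 : R) = x * (y * x) * y := by rw [← mul_assoc, hxy, one_mul, hxy]
      _ = 0 := by rw [h0, mul_zero, zero_mul]

theorem mem_jacobson_bot_of_not_isUnit {x : R} (hx : ¬IsUnit x) :
    x ∈ Ideal.jacobson (⊥ : Ideal R) := by
  refine Ideal.mem_jacobson_iff.mpr fun y => ?_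
  have hyx : ¬IsUnit (-(y * x)) := by
    rw [IsUnit.neg_iff]
    exact fun h => hx (isUnit_of_mul_isUnit_right h)
  obtain ⟨u, hu⟩ :=
    (isUnit_or_isUnit_of_add_one (add_neg_cancel_right 1 (y * x))).resolve_right hyx
  refine ⟨↑u⁻¹, ?_⟩
  rw [Ideal.mem_bot, mul_assoc, ← mul_add_one, add_comm (y * x), ← hu, Units.inv_mul, sub_self]

theorem isLocalHom_of_jacobson_le_ker {S : Type*} [Semiring S] [Nontrivial S] (f : R →+* S)
    (hf : Ideal.jacobson ⊥ ≤ RingHom.ker f) : IsLocalHom f where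
  map_nonunit a ha := by
    by_contra hna
    rw [RingHom.mem_ker.mp (hf (mem_jacobson_bot_of_not_isUnit hna))] at ha
    exact not_isUnit_zero ha

end IsLocalRing

namespace LinearMap

theorem nonempty_linearEquiv_of_isUnit_comp_s3 {A M P : Type*} [Ring A]
    [AddCommGroup M] [Module A M] [AddCommGroup P] [Module A P]
    [Nontrivial (Module.End A M)] [IsLocalRing (Module.End A P)]
    {a : P →ₗ[A] M} {b : M →ₗ[A] P} (h : IsUnit (a ∘ₗ b)) : Nonempty (M ≃ₗ[A] P) := by
  obtain ⟨c, hc⟩ := h.exists_left_inv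
  have hcab : c ∘ₗ a ∘ₗ b = LinearMap.id := hc
  have hcab_apply (z : M) : c (a (b z)) = z := LinearMap.congr_fun hcab z
  have he : IsIdempotentElem (b ∘ₗ c ∘ₗ a) :=
    LinearMap.ext fun z => congrArg b (hcab_apply (c (a z)))
  rcases IsLocalRing.isIdempotentElem_iff.mp he with h0 | h1
  · refine absurd (LinearMap.ext fun z => ?_) (one_ne_zero (α := Module.End A M))
    calc z = c (a ((b ∘ₗ c ∘ₗ a) (b z))) := by simp [hcab_apply]
      _ = 0 := by rw [h0]; simp
  · exact ⟨.ofLinearMap (f := b) (g := c ∘ₗ a) h1 hcab⟩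

variable {R ι : Type*} [Semiring R] [DecidableEq ι] {φ : ι → Type*}
  [∀ i, AddCommMonoid (φ i)] [∀ i, Module R (φ i)]

theorem proj_comp_mul_comp_single [Fintype ι] (f g : Module.End R (∀ i, φ i)) (i j : ι) :
    proj i ∘ₗ (f * g) ∘ₗ single R φ j =
      ∑ k, (proj i ∘ₗ f ∘ₗ single R φ k) ∘ₗ (proj k ∘ₗ g ∘ₗ single R φ j) := by
  ext x
  simp only [comp_apply, coe_single, proj_apply, sum_apply, Module.End.mul_apply]
  conv_lhs => rw [← Finset.univ_sum_single (g (Pi.single j x)), map_sum, Finset.sum_apply]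

theorem exists_unit_proj_comp_comp_single_eq (G : ∀ i, (Module.End R (φ i))ˣ) :
    ∃ F : (Module.End R (∀ i, φ i))ˣ,
      ∀ j, proj j ∘ₗ (F : Module.End R (∀ i, φ i)) ∘ₗ single R φ j = G j :=
  ⟨GeneralLinearGroup.ofLinearEquiv
      (LinearEquiv.piCongrRight fun i => GeneralLinearGroup.toLinearEquiv (G i)),
    fun j => by ext; simp⟩

end LinearMap

section DiagonalResidue

open LinearMap

variable {A ι : Type*} [Ring A] [Fintype ι] [DecidableEq ι] {N : ι → Type*}
  [∀ i, AddCommGroup (N i)] [∀ i, Module A (N i)] [∀ i, IsLocalRing (Module.End A (N i))]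
  {D : ι → Type*} [∀ i, Ring (D i)]

def diagonalResidueHom (hpair : ∀ i j, i ≠ j → IsEmpty (N i ≃ₗ[A] N j))
    (q : ∀ i, Module.End A (N i) →+* D i) (hq : ∀ i, Ideal.jacobson ⊥ ≤ RingHom.ker (q i))
    (j : ι) : Module.End A (∀ i, N i) →+* D j where
  toFun f := q j (proj j ∘ₗ f ∘ₗ single A N j)
  map_one' := by
    rw [Module.End.one_eq_id, id_comp, proj_comp_single_same, ← Module.End.one_eq_id, map_one]
  map_mul' f g := by
    -- Each off-diagonal summand `N j → N k → N j` is a nonunit, hence lies in the radical.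
    rw [proj_comp_mul_comp_single, map_sum, Finset.sum_eq_single j, ← map_mul]
    · rfl
    · intro k _ hkj
      refine RingHom.mem_ker.mp (hq j (IsLocalRing.mem_jacobson_bot_of_not_isUnit fun hu => ?_))
      exact (hpair j k hkj.symm).false (nonempty_linearEquiv_of_isUnit_comp_s3 hu).some
    · exact fun h => (h (Finset.mem_univ j)).elim
  map_zero' := by simp
  map_add' f g := by simp [add_comp, comp_add]

end DiagonalResidue

/-- With `N = N 1 ⊕ ⋯ ⊕ N s` (the `N j` pairwise non-isomorphic
with local endomorphism rings) and `D j` the residue division ring of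
`End_A (N j)` (presented via surjective ring homomorphisms `q j` with kernel
the Jacobson radical), sending an automorphism `f` of `N` to the tuple of
classes of its diagonal components induces a surjective group homomorphism
`(Eˣ)_ab → (D 1ˣ)_ab × ⋯ × (D sˣ)_ab`, where `E = End_A N`. -/
theorem stmt3 {A : Type*} [Ring A] {s : ℕ} (N : Fin s → Type*)
    [∀ j, AddCommGroup (N j)] [∀ j, Module A (N j)]
    (hloc : ∀ j, IsLocalRing (Module.End A (N j)))
    (hpair : ∀ i j, i ≠ j → IsEmpty (N i ≃ₗ[A] N j))
    (D : Fin s → Type*) [∀ j, DivisionRing (D j)]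
    (q : ∀ j, Module.End A (N j) →+* D j)
    (hq : ∀ j, Function.Surjective (q j))
    (hker : ∀ j, RingHom.ker (q j) = Ideal.jacobson (⊥ : Ideal (Module.End A (N j)))) :
    ∃ Φ : Abelianization (Module.End A (∀ j, N j))ˣ →* (∀ j, Abelianization (D j)ˣ),
      Function.Surjective Φ ∧
      ∀ (f : (Module.End A (∀ j, N j))ˣ) (j : Fin s) (u : (D j)ˣ),
        (u : D j) = q j ((LinearMap.proj j) ∘ₗ
            ((f : Module.End A (∀ i, N i)) : (∀ i, N i) →ₗ[A] (∀ i, N i)) ∘ₗ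
            (LinearMap.single A N j)) →
        Φ (Abelianization.of f) j = Abelianization.of u := by
  have hjac j : Ideal.jacobson ⊥ ≤ RingHom.ker (q j) := (hker j).ge
  let ρ j := diagonalResidueHom hpair q hjac j
  refine ⟨MonoidHom.pi fun j => Abelianization.map (Units.map (ρ j).toMonoidHom), ?_, ?_⟩
  · intro x
    have hlift j : ∃ G : (Module.End A (N j))ˣ,
        Abelianization.of (Units.map (q j).toMonoidHom G) = x j := by
      obtain ⟨u, hu⟩ := QuotientGroup.mk_surjective (x j)
      obtain ⟨G, hG⟩ := IsLocalRing.surjective_units_map_of_local_ringHom (q j) (hq j)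
        (IsLocalRing.isLocalHom_of_jacobson_le_ker (q j) (hjac j)) u
      exact ⟨G, hG ▸ hu⟩
    choose G hG using hlift
    obtain ⟨F, hF⟩ := LinearMap.exists_unit_proj_comp_comp_single_eq G
    refine ⟨Abelianization.of F, funext fun j => ?_⟩
    rw [← hG j, MonoidHom.pi_apply, Abelianization.map_of]
    congr 1
    exact Units.ext (congrArg (q j) (hF j))
  · intro f j u hu
    rw [MonoidHom.pi_apply, Abelianization.map_of]
    exact congrArg Abelianization.of (Units.ext hu.symm)
end

section
/- Let k be a field, A an associative k-algebra with identity, and N_1, …, N_s pairwise non-isomorphic left A-modules, each having a local endomorphism ring with Jacobson radical 𝔪_j. Suppose that for each j the natural ring homomorphism k → End_A(N_j)/𝔪_j, sending a ∈ k to the class of a·id_{N_j}, is an isomorphism. Set N = N_1 ⊕ ⋯ ⊕ N_s and E = End_A(N). Then the group homomorphism (kˣ)^s → (Eˣ)_ab sending (a_1, …, a_s) to the class of the diagonal automorphism a_1·id_{N_1} ⊕ ⋯ ⊕ a_s·id_{N_s} is a split monomorphism; in particular (kˣ)^s is isomorphic to a direct summand of the abelian group (Eˣ)_ab. -/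
/-!
For each `j`, the residue in `k` of the `(j, j)` block is a monoid homomorphism `End_A(N) → k`:
modulo the radical of `End_A(N_j)`, the `(j, j)` block of `e * f` is the product of the `(j, j)`
blocks, because every cross term `N_j → N_l → N_j` with `l ≠ j` is a non-unit of the local ring
`End_A(N_j)` (a split monomorphism into a module with local endomorphism ring is an isomorphism,
and `N_l ≇ N_j`). On units these homomorphisms factor through the abelianization, and they send
the diagonal automorphism `a_1 • id ⊕ ⋯ ⊕ a_s • id` back to `(a_1, …, a_s)`.
-/

theorem IsLocalRing.eq_zero_or_eq_one_of_isIdempotentElem {R : Type*} [Ring R] [IsLocalRing R]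
    {e : R} (he : IsIdempotentElem e) : e = 0 ∨ e = 1 := by
  rcases IsLocalRing.isUnit_or_isUnit_of_add_one (add_sub_cancel e 1) with h | h
  · exact .inr ((IsIdempotentElem.iff_eq_one_of_isUnit h).1 he)
  · exact .inl (sub_eq_self.1 ((IsIdempotentElem.iff_eq_one_of_isUnit h).1 he.one_sub))

instance IsLocalRing.toIsDedekindFiniteMonoid {R : Type*} [Ring R] [IsLocalRing R] :
    IsDedekindFiniteMonoid R where
  mul_eq_one_symm {a b} hab := by
    have he : IsIdempotentElem (b * a) := by
      rw [IsIdempotentElem, mul_assoc, ← mul_assoc a, hab, one_mul]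
    refine (eq_zero_or_eq_one_of_isIdempotentElem he).resolve_left fun h0 =>
      one_ne_zero (α := R) ?_
    calc (1 : R) = a * (b * a) * b := by rw [← mul_assoc, hab, one_mul, hab]
      _ = 0 := by rw [h0, mul_zero, zero_mul]

theorem IsLocalRing.mem_jacobson_bot_iff_not_isUnit {R : Type*} [Ring R] [IsLocalRing R] {x : R} :
    x ∈ Ideal.jacobson (⊥ : Ideal R) ↔ ¬IsUnit x := by
  constructor
  · intro hx hu
    exact Ideal.jacobson_eq_top_iff.not.2 bot_ne_top (Ideal.eq_top_of_isUnit_mem _ hx hu)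
  · intro hx
    refine Ideal.mem_jacobson_iff.2 fun y => ?_
    have hyx : ¬IsUnit (-(y * x)) := fun h =>
      hx (isUnit_of_mul_isUnit_right ((IsUnit.neg_iff _).1 h))
    obtain ⟨u, hu⟩ := (IsLocalRing.isUnit_or_isUnit_of_add_one
      (by abel : y * x + 1 + -(y * x) = 1)).resolve_right hyx
    exact ⟨↑u⁻¹, by rw [Ideal.mem_bot, mul_assoc, ← mul_add_one, ← hu, Units.inv_mul, sub_self]⟩

theorem LinearMap.nonempty_linearEquiv_of_comp_eq_id {R M M' : Type*} [Ring R]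
    [AddCommGroup M] [Module R M] [AddCommGroup M'] [Module R M']
    [IsLocalRing (Module.End R M)] [Nontrivial M'] (f : M' →ₗ[R] M) (g : M →ₗ[R] M')
    (hgf : g ∘ₗ f = LinearMap.id) : Nonempty (M' ≃ₗ[R] M) := by
  have hp : IsIdempotentElem (f ∘ₗ g : Module.End R M) := by
    rw [IsIdempotentElem, Module.End.mul_eq_comp, comp_assoc, ← comp_assoc g, hgf, id_comp]
  rcases IsLocalRing.eq_zero_or_eq_one_of_isIdempotentElem hp with h0 | h1
  · refine absurd ?_ (one_ne_zero (α := Module.End R M'))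
    calc (1 : Module.End R M') = g ∘ₗ f ∘ₗ g ∘ₗ f := by rw [hgf, comp_id, hgf]; rfl
      _ = g ∘ₗ (f ∘ₗ g) ∘ₗ f := by rw [comp_assoc]
      _ = 0 := by rw [h0, zero_comp, comp_zero]
  · exact ⟨.ofLinearMap f g h1 hgf⟩

theorem LinearMap.not_isUnit_comp_of_isEmpty_linearEquiv {R M M' : Type*} [Ring R]
    [AddCommGroup M] [Module R M] [AddCommGroup M'] [Module R M']
    [IsLocalRing (Module.End R M)] [IsLocalRing (Module.End R M')]
    (hMM' : IsEmpty (M' ≃ₗ[R] M)) (f : M' →ₗ[R] M) (g : M →ₗ[R] M') :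
    ¬IsUnit (g ∘ₗ f : Module.End R M') := by
  rintro ⟨u, hu⟩
  have : Nontrivial M' := by
    by_contra h
    rw [not_nontrivial_iff_subsingleton] at h
    exact not_subsingleton (Module.End R M') inferInstance
  refine hMM'.false (nonempty_linearEquiv_of_comp_eq_id f (↑u⁻¹ ∘ₗ g) ?_).some
  rw [comp_assoc, ← hu]
  exact u.inv_mul

namespace Ideal

variable {k R : Type*} [CommSemiring k] [Ring R] [Algebra k R] (J : Ideal R)
  (hJ : ∀ g : R, ∃! a : k, g - a • 1 ∈ J)

theorem mul_sub_smul_one_mem_of_sub_mem {g h : R} {a b : k} (hg : g - a • 1 ∈ J)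
    (hh : h - b • 1 ∈ J) : g * h - (a * b) • (1 : R) ∈ J := by
  have hsplit : g * h - (a * b) • (1 : R) = g * (h - b • 1) + algebraMap k R b * (g - a • 1) := by
    rw [mul_sub, mul_sub, mul_smul_comm, ← Algebra.smul_def, ← Algebra.smul_def, mul_one,
      smul_smul, mul_comm b]
    abel
  rw [hsplit]
  exact J.add_mem (J.mul_mem_left g hh) (J.mul_mem_left _ hg)

/-- The composite `R → R ⧸ J ≃ k`, written without the quotient since `J` is only a left ideal. -/
noncomputable def residueHom : R →+* k where
  toFun g := (hJ g).choose
  map_one' := ((hJ 1).unique (hJ 1).choose_spec.1 (by simp)).trans rfl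
  map_mul' g h := (hJ (g * h)).unique (hJ (g * h)).choose_spec.1
    (J.mul_sub_smul_one_mem_of_sub_mem (hJ g).choose_spec.1 (hJ h).choose_spec.1)
  map_zero' := (hJ 0).unique (hJ 0).choose_spec.1 (by simp)
  map_add' g h := (hJ (g + h)).unique (hJ (g + h)).choose_spec.1 (by
    rw [add_smul, add_sub_add_comm]
    exact J.add_mem (hJ g).choose_spec.1 (hJ h).choose_spec.1)

theorem residueHom_eq_of_sub_mem {g : R} {a : k} (h : g - a • 1 ∈ J) : J.residueHom hJ g = a :=
  ((hJ g).unique h (hJ g).choose_spec.1).symm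

theorem residueHom_smul_one (a : k) : J.residueHom hJ (a • 1) = a :=
  J.residueHom_eq_of_sub_mem hJ (by simp)

theorem residueHom_eq_zero_of_mem {g : R} (hg : g ∈ J) : J.residueHom hJ g = 0 :=
  J.residueHom_eq_of_sub_mem hJ (by simpa using hg)

end Ideal

namespace Module.End

section PiEntry

variable {R ι : Type*} [Semiring R] [DecidableEq ι] {M : ι → Type*}
  [∀ i, AddCommMonoid (M i)] [∀ i, Module R (M i)]

def piEntry (i j : ι) (e : Module.End R (∀ l, M l)) : M j →ₗ[R] M i :=
  LinearMap.proj i ∘ₗ e ∘ₗ LinearMap.single R M j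

theorem piEntry_one_self (i : ι) : piEntry i i (1 : Module.End R (∀ l, M l)) = 1 :=
  LinearMap.proj_comp_single_same R M i

theorem piEntry_mul [Fintype ι] (i j : ι) (e f : Module.End R (∀ l, M l)) :
    piEntry i j (e * f) = ∑ l, piEntry i l e ∘ₗ piEntry l j f := by
  ext x
  simp only [piEntry, LinearMap.coe_comp, Function.comp_apply, LinearMap.sum_apply,
    LinearMap.coe_proj, Function.eval, LinearMap.coe_single, mul_apply]
  rw [← Finset.sum_apply, ← map_sum, Finset.univ_sum_single]

end PiEntry

section PiDiagonal

variable (k : Type*) {A ι : Type*} [CommSemiring k] [Semiring A] {N : ι → Type*}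
  [∀ i, AddCommMonoid (N i)] [∀ i, Module A (N i)] [∀ i, Module k (N i)]
  [∀ i, SMulCommClass A k (N i)]

def piDiagonal : (ι → k) →* Module.End A (∀ i, N i) where
  toFun a := LinearMap.pi fun j => a j • LinearMap.proj j
  map_one' := by ext; simp
  map_mul' a b := by ext; simp [mul_smul]

variable [DecidableEq ι]

theorem piEntry_piDiagonal_self (a : ι → k) (j : ι) :
    piEntry j j (piDiagonal k a : Module.End A (∀ i, N i)) = a j • 1 := by
  ext; simp [piEntry, piDiagonal]

end PiDiagonal

section DiagonalResidue

variable {k A ι : Type*} [CommSemiring k] [Ring A] [Algebra k A] [Fintype ι] [DecidableEq ι]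
  {N : ι → Type*} [∀ i, AddCommGroup (N i)] [∀ i, Module A (N i)] [∀ i, Module k (N i)]
  [∀ i, IsScalarTower k A (N i)] [∀ i, SMulCommClass A k (N i)]
  [∀ i, IsLocalRing (Module.End A (N i))]
  (hpair : ∀ i j, i ≠ j → IsEmpty (N i ≃ₗ[A] N j))
  (hres : ∀ j, ∀ g : Module.End A (N j),
    ∃! a : k, g - a • (1 : Module.End A (N j)) ∈ Ideal.jacobson (⊥ : Ideal (Module.End A (N j))))

noncomputable def diagonalResidue (j : ι) : Module.End A (∀ i, N i) →* k where
  toFun e := (Ideal.jacobson ⊥).residueHom (hres j) (piEntry j j e)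
  map_one' := by rw [piEntry_one_self, map_one]
  map_mul' e f := by
    rw [piEntry_mul, map_sum, Finset.sum_eq_single_of_mem j (Finset.mem_univ j),
      ← Module.End.mul_eq_comp, map_mul]
    intro l _ hlj
    exact Ideal.residueHom_eq_zero_of_mem _ _ (IsLocalRing.mem_jacobson_bot_iff_not_isUnit.2
      (LinearMap.not_isUnit_comp_of_isEmpty_linearEquiv (hpair j l hlj.symm) _ _))

theorem diagonalResidue_piDiagonal (a : ι → k) (j : ι) :
    diagonalResidue hpair hres j (piDiagonal k a) = a j := by
  rw [diagonalResidue, MonoidHom.coe_mk, OneHom.coe_mk, piEntry_piDiagonal_self,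
    Ideal.residueHom_smul_one]

end DiagonalResidue

end Module.End

open Module.End in
/-- Let `k` be a field, `A` a `k`-algebra, and `N 1, …, N s`
pairwise non-isomorphic `A`-modules with local endomorphism rings such that the
natural map `k → End_A (N j) / 𝔪 j` is an isomorphism for every `j` (expressed
here by the unique existence of `a : k` with `g - a • id` in the Jacobson
radical, for every endomorphism `g`).  Then the homomorphism
`(kˣ)^s → (End_A (N 1 ⊕ ⋯ ⊕ N s)ˣ)_ab` sending `(a 1, …, a s)` to the class of
the diagonal automorphism `a 1 • id ⊕ ⋯ ⊕ a s • id` is a split monomorphism;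
in particular `(kˣ)^s` is a direct summand of the abelianized automorphism
group. -/
theorem stmt5 {k : Type*} [Field k] {A : Type*} [Ring A] [Algebra k A]
    {s : ℕ} (N : Fin s → Type*)
    [∀ j, AddCommGroup (N j)] [∀ j, Module A (N j)]
    [∀ j, Module k (N j)] [∀ j, IsScalarTower k A (N j)] [∀ j, SMulCommClass A k (N j)]
    (hloc : ∀ j, IsLocalRing (Module.End A (N j)))
    (hpair : ∀ i j, i ≠ j → IsEmpty (N i ≃ₗ[A] N j))
    (hres : ∀ j, ∀ g : Module.End A (N j),
      ∃! a : k, g - a • (1 : Module.End A (N j)) ∈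
        Ideal.jacobson (⊥ : Ideal (Module.End A (N j)))) :
    ∃ Φ : (∀ j, kˣ) →* Abelianization (Module.End A (∀ j, N j))ˣ,
      (∀ a : ∀ j, kˣ, ∃ e : (Module.End A (∀ j, N j))ˣ,
        (e : Module.End A (∀ j, N j)) =
          LinearMap.pi (fun j => (a j : k) • (LinearMap.proj j : (∀ i, N i) →ₗ[A] N j))) ∧
      (∀ (a : ∀ j, kˣ) (e : (Module.End A (∀ j, N j))ˣ),
        (e : Module.End A (∀ j, N j)) =
          LinearMap.pi (fun j => (a j : k) • (LinearMap.proj j : (∀ i, N i) →ₗ[A] N j)) →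
        Φ a = Abelianization.of e) ∧
      Function.Injective Φ ∧
      ∃ ρ : Abelianization (Module.End A (∀ j, N j))ˣ →* (∀ j, kˣ),
        ρ.comp Φ = MonoidHom.id (∀ j, kˣ) := by
  have := hloc
  let Φ : (∀ j, kˣ) →* Abelianization (Module.End A (∀ j, N j))ˣ :=
    Abelianization.of.comp ((Units.map (piDiagonal k)).comp MulEquiv.piUnits.symm.toMonoidHom)
  let ρ : Abelianization (Module.End A (∀ j, N j))ˣ →* (∀ j, kˣ) :=
    Abelianization.lift (MonoidHom.pi fun j => Units.map (diagonalResidue hpair hres j))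
  have hρΦ : Function.LeftInverse ρ Φ := fun a =>
    funext fun j => Units.ext (diagonalResidue_piDiagonal hpair hres _ j)
  exact ⟨Φ, fun a => ⟨Units.map (piDiagonal k) (MulEquiv.piUnits.symm a), rfl⟩,
    fun a e he => congrArg Abelianization.of (Units.ext he.symm),
    hρΦ.injective, ρ, MonoidHom.ext hρΦ⟩
end

section
/- Let (A, 𝔫) be a commutative Noetherian local ring whose residue field k = A/𝔫 is algebraically closed, and let N be a nonzero finitely generated A-module whose endomorphism ring End_A(N) is local with Jacobson radical 𝔪. Then the ring homomorphism A → End_A(N)/𝔪 sending a ∈ A to the class of the endomorphism of multiplication by a is surjective with kernel 𝔫; equivalently, it induces an isomorphism of k onto the residue division ring End_A(N)/𝔪. -/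
/-!
Every endomorphism `g` of the finitely generated module `N` is integral over `A`. A monic
polynomial killing `g` splits modulo `𝔫` because `k` is algebraically closed; lifting its roots
to `a₁, …, aₙ ∈ A` gives `∏ (g - aᵢ) ∈ 𝔪`, since by Nakayama no `a ∈ 𝔫` acts invertibly on
`N ≠ 0`. As `End_A(N)` is local, one of the factors `g - aᵢ` is already in `𝔪`.
-/

open Polynomial IsLocalRing

namespace IsLocalRing

variable {R : Type*} [Ring R] [IsLocalRing R]

-- If `a * b = 1` then `b * a` is idempotent, and the only idempotents of a local ring are `0, 1`.
instance (priority := 100) isDedekindFiniteMonoid : IsDedekindFiniteMonoid R where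
  mul_eq_one_symm {a b} hab := by
    have he : IsIdempotentElem (b * a) := by
      rw [IsIdempotentElem, mul_assoc, ← mul_assoc a, hab, one_mul]
    rcases isUnit_or_isUnit_of_add_one (add_sub_cancel (b * a) 1) with h | h
    · exact (IsIdempotentElem.iff_eq_one_of_isUnit h).mp he
    · have hba : b * a = 0 := by
        simpa using (IsIdempotentElem.iff_eq_one_of_isUnit h).mp he.one_sub
      refine absurd ?_ (one_ne_zero (α := R))
      calc (1 : R) = a * (b * a) * b := by rw [← mul_assoc, hab, one_mul, hab]
        _ = 0 := by rw [hba, mul_zero, zero_mul]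

theorem mem_jacobson_bot_iff_not_isUnit_s6 {x : R} :
    x ∈ Ideal.jacobson (⊥ : Ideal R) ↔ ¬IsUnit x := by
  refine ⟨fun hx hu => ?_, fun hx => Ideal.mem_jacobson_iff.mpr fun y => ?_⟩
  · exact bot_ne_top (Ideal.jacobson_eq_top_iff.mp (Ideal.eq_top_of_isUnit_mem _ hx hu))
  · have hunit : IsUnit (y * x + 1) := by
      refine (isUnit_or_isUnit_of_add_one (add_neg_cancel_comm (y * x) 1)).resolve_right ?_
      exact fun h => hx (isUnit_of_mul_isUnit_right ((IsUnit.neg_iff _).mp h))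
    obtain ⟨z, hz⟩ := hunit.exists_left_inv
    refine ⟨z, ?_⟩
    rw [Ideal.mem_bot, mul_assoc, ← mul_add_one, hz, sub_self]

end IsLocalRing

theorem Polynomial.Monic.exists_list_prod_X_sub_C_map_residue_eq {A : Type*} [CommRing A]
    [IsLocalRing A] [IsAlgClosed (ResidueField A)] {p : A[X]} (hp : p.Monic) :
    ∃ l : List A, ((l.map fun a => X - C a).prod).map (residue A) = p.map (residue A) := by
  obtain ⟨l, hl⟩ := List.map_surjective_iff.mpr (residue_surjective (R := A))
    (p.map (residue A)).roots.toList
  refine ⟨l, ?_⟩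
  conv_rhs => rw [(IsAlgClosed.splits _).eq_prod_roots_of_monic (hp.map _), ← Multiset.coe_toList
    (roots _), ← hl, Multiset.map_coe, Multiset.prod_coe, List.map_map]
  simp [Polynomial.map_list_prod, Function.comp_def]

theorem Polynomial.aeval_mem_of_algebraMap_coeff_mem {A R : Type*} [CommSemiring A] [Semiring R]
    [Algebra A R] {J : Ideal R} (x : R) {p : A[X]} (hp : ∀ i, algebraMap A R (p.coeff i) ∈ J) :
    aeval x p ∈ J := by
  rw [aeval_eq_sum_range]
  refine J.sum_mem fun i _ => ?_
  rw [Algebra.smul_def, Algebra.commutes]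
  exact J.mul_mem_left _ (hp i)

theorem IsIntegral.exists_sub_algebraMap_mem_jacobson_bot {A R : Type*} [CommRing A]
    [IsLocalRing A] [IsAlgClosed (ResidueField A)] [Ring R] [IsLocalRing R] [Algebra A R]
    [IsLocalHom (algebraMap A R)] {g : R} (hg : IsIntegral A g) :
    ∃ a : A, g - algebraMap A R a ∈ Ideal.jacobson (⊥ : Ideal R) := by
  obtain ⟨p, hpm, hpg⟩ := hg
  rw [← aeval_def] at hpg
  obtain ⟨l, hl⟩ := hpm.exists_list_prod_X_sub_C_map_residue_eq
  have hprod : aeval g ((l.map fun a => X - C a).prod - p) ∈ Ideal.jacobson (⊥ : Ideal R) := by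
    refine aeval_mem_of_algebraMap_coeff_mem g fun i => ?_
    rw [mem_jacobson_bot_iff_not_isUnit_s6, isUnit_map_iff, ← mem_nonunits_iff, ← mem_maximalIdeal,
      ← residue_eq_zero_iff, ← coeff_map, Polynomial.map_sub, hl, sub_self, coeff_zero]
  rw [map_sub, hpg, sub_zero, map_list_prod, List.map_map] at hprod
  by_contra! hfactors
  refine mem_jacobson_bot_iff_not_isUnit_s6.mp hprod (List.prod_isUnit fun f hf => ?_)
  obtain ⟨a, -, rfl⟩ := List.mem_map.mp hf
  have ha := hfactors a
  rw [mem_jacobson_bot_iff_not_isUnit_s6, not_not] at ha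
  simpa using ha

instance Module.End.isLocalHom_algebraMap {A N : Type*} [CommRing A] [IsLocalRing A]
    [AddCommGroup N] [Module A N] [Nontrivial N] [Module.Finite A N] :
    IsLocalHom (algebraMap A (Module.End A N)) where
  map_nonunit a ha := by
    by_contra hna
    have hsurj := ((Module.End.isUnit_iff _).mp ha).2
    refine Submodule.top_ne_pointwise_smul_of_mem_jacobson_annihilator (M := N)
      (maximalIdeal_le_jacobson _ ((mem_maximalIdeal a).mpr hna)) (top_le_iff.mp fun n _ => ?_).symm
    obtain ⟨m, rfl⟩ := hsurj n
    exact Submodule.smul_mem_pointwise_smul m a ⊤ trivial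

theorem stmt6_general {A : Type*} [CommRing A] [IsLocalRing A]
    [IsAlgClosed (IsLocalRing.ResidueField A)]
    (N : Type*) [AddCommGroup N] [Module A N] [Nontrivial N] [Module.Finite A N]
    (hloc : IsLocalRing (Module.End A N)) :
    (∀ g : Module.End A N, ∃ a : A,
        g - algebraMap A (Module.End A N) a ∈
          Ideal.jacobson (⊥ : Ideal (Module.End A N))) ∧
    (∀ a : A,
        algebraMap A (Module.End A N) a ∈ Ideal.jacobson (⊥ : Ideal (Module.End A N)) ↔
          a ∈ IsLocalRing.maximalIdeal A) := by
  refine ⟨fun g => (Algebra.IsIntegral.isIntegral g).exists_sub_algebraMap_mem_jacobson_bot,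
    fun a => ?_⟩
  rw [mem_jacobson_bot_iff_not_isUnit_s6, isUnit_map_iff, mem_maximalIdeal, mem_nonunits_iff]

/-- Let `(A, 𝔫)` be a commutative Noetherian local ring with
algebraically closed residue field, and `N` a nonzero finitely generated
`A`-module whose endomorphism ring is local with Jacobson radical `𝔪`.  Then
the natural ring homomorphism `A → End_A N`, `a ↦ a • id`, is surjective onto
`End_A N` modulo `𝔪` and an element `a` maps into `𝔪` exactly when `a ∈ 𝔫`;
equivalently, it induces an isomorphism `A/𝔫 ≅ End_A N / 𝔪`. -/
theorem stmt6 {A : Type*} [CommRing A] [IsNoetherianRing A] [IsLocalRing A]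
    [IsAlgClosed (IsLocalRing.ResidueField A)]
    (N : Type*) [AddCommGroup N] [Module A N] [Nontrivial N] [Module.Finite A N]
    (hloc : IsLocalRing (Module.End A N)) :
    (∀ g : Module.End A N, ∃ a : A,
        g - algebraMap A (Module.End A N) a ∈
          Ideal.jacobson (⊥ : Ideal (Module.End A N))) ∧
    (∀ a : A,
        algebraMap A (Module.End A N) a ∈ Ideal.jacobson (⊥ : Ideal (Module.End A N)) ↔
          a ∈ IsLocalRing.maximalIdeal A) :=
  stmt6_general N hloc
end

section
/- Let k be an algebraically closed field of characteristic not two and S = k[[x, y]] the formal power series ring in two variables over k. Let f_1, …, f_n ∈ (x, y) be prime elements of S that are pairwise non-associate, set f = f_1⋯f_n, R = S/fS, and S_i = S/(f_1⋯f_i)S for 1 ≤ i ≤ n, each S_i viewed as an R-module. Then for indices with i ≤ j there is an isomorphism of R-modules Hom_R(S_j, S_i) ≅ S_i, and for indices with j < i there is an isomorphism of R-modules Hom_R(S_j, S_i) ≅ (f_{j+1}⋯f_i)S/(f_1⋯f_i)S, the ideal of S_i generated by the class of f_{j+1}⋯f_i. -/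
set_option synthInstance.maxHeartbeats 4000000
set_option maxHeartbeats 4000000

section aux
lemma mk_smul' {R : Type*} [CommRing R] (I : Ideal R) (r x : R) :
    r • (Ideal.Quotient.mk I x) = Ideal.Quotient.mk I (r * x) := by
  show r • (Submodule.Quotient.mk x : R ⧸ I) = Submodule.Quotient.mk (r * x)
  rw [← Submodule.Quotient.mk_smul, smul_eq_mul]

noncomputable def homQuotEquiv {R : Type*} [CommRing R] (a : R) {N : Type*} [AddCommGroup N]
    [Module R N] (M : Submodule R N)
    (h1 : ∀ m ∈ M, a • m = (0 : N)) (h2 : ∀ m : N, a • m = 0 → m ∈ M) :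
    ((R ⧸ Ideal.span {a}) →ₗ[R] N) ≃ₗ[R] M where
  toFun φ := ⟨φ 1, h2 _ (by
    have h0 : a • (1 : R ⧸ Ideal.span {a}) = 0 := by
      show a • (Ideal.Quotient.mk _ 1) = 0
      rw [mk_smul', mul_one, Ideal.Quotient.eq_zero_iff_mem]
      exact Ideal.mem_span_singleton_self a
    rw [← map_smul, h0, map_zero])⟩
  map_add' φ ψ := by ext; simp
  map_smul' r φ := by ext; simp
  invFun m := Submodule.liftQ (Ideal.span {a}) (LinearMap.toSpanSingleton R N m.1) (by
    intro x hx
    obtain ⟨c, rfl⟩ := Ideal.mem_span_singleton.mp hx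
    simp only [LinearMap.mem_ker, LinearMap.toSpanSingleton_apply, mul_comm a c, mul_smul]
    rw [h1 m.1 m.2, smul_zero])
  left_inv φ := by
    apply LinearMap.ext
    intro x
    obtain ⟨y, rfl⟩ := Submodule.Quotient.mk_surjective _ x
    have : (Submodule.Quotient.mk y : R ⧸ Ideal.span {a}) = y • 1 := by
      show (Ideal.Quotient.mk _ y : R ⧸ Ideal.span {a}) = y • Ideal.Quotient.mk _ 1
      rw [mk_smul', mul_one]
    show Submodule.liftQ _ (LinearMap.toSpanSingleton R N (φ 1)) _ (Submodule.Quotient.mk y)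
      = φ (Submodule.Quotient.mk y)
    rw [Submodule.liftQ_apply, LinearMap.toSpanSingleton_apply, this, map_smul]
  right_inv m := by
    apply Subtype.ext
    show Submodule.liftQ _ _ _ (Submodule.Quotient.mk 1) = m.1
    rw [Submodule.liftQ_apply, LinearMap.toSpanSingleton_apply, one_smul]
end aux

/-- Let `k` be an algebraically closed field of characteristic
not two, `S = k[[x, y]]`, and `f 1, …, f n ∈ (x, y)` pairwise non-associate
prime elements.  Put `f = f 1 ⋯ f n`, `R = S/(f)`, and `S i = S/(f 1 ⋯ f i)`
(realized as the `R`-module `R/(f 1 ⋯ f i)R`).  Then for `i ≤ j` there is an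
isomorphism of `R`-modules `Hom_R(S j, S i) ≅ S i`, and for `j < i` an
isomorphism of `R`-modules
`Hom_R(S j, S i) ≅ (f (j+1) ⋯ f i)S/(f 1 ⋯ f i)S`, the ideal of `S i`
generated by the class of `f (j+1) ⋯ f i`. -/
theorem stmt18 {k : Type*} [Field k] [IsAlgClosed k] (hchar : ringChar k ≠ 2)
    (n : ℕ) (f : Fin n → MvPowerSeries (Fin 2) k)
    (hprime : ∀ i, Prime (f i))
    (hmem : ∀ i, f i ∈ (Ideal.span {MvPowerSeries.X 0, MvPowerSeries.X 1} :
      Ideal (MvPowerSeries (Fin 2) k)))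
    (hnassoc : ∀ i j, i ≠ j → ¬ Associated (f i) (f j)) :
    ∀ i j : Fin n,
      (i ≤ j →
        Nonempty
          ((((MvPowerSeries (Fin 2) k ⧸ Ideal.span {∏ l, f l}) ⧸
              Ideal.span
                {Ideal.Quotient.mk (Ideal.span {∏ l, f l}) (∏ l ∈ Finset.Iic j, f l)})
            →ₗ[MvPowerSeries (Fin 2) k ⧸ Ideal.span {∏ l, f l}]
            ((MvPowerSeries (Fin 2) k ⧸ Ideal.span {∏ l, f l}) ⧸
              Ideal.span
                {Ideal.Quotient.mk (Ideal.span {∏ l, f l}) (∏ l ∈ Finset.Iic i, f l)}))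
          ≃ₗ[MvPowerSeries (Fin 2) k ⧸ Ideal.span {∏ l, f l}]
            ((MvPowerSeries (Fin 2) k ⧸ Ideal.span {∏ l, f l}) ⧸
              Ideal.span
                {Ideal.Quotient.mk (Ideal.span {∏ l, f l}) (∏ l ∈ Finset.Iic i, f l)}))) ∧
      (j < i →
        Nonempty
          ((((MvPowerSeries (Fin 2) k ⧸ Ideal.span {∏ l, f l}) ⧸
              Ideal.span
                {Ideal.Quotient.mk (Ideal.span {∏ l, f l}) (∏ l ∈ Finset.Iic j, f l)})
            →ₗ[MvPowerSeries (Fin 2) k ⧸ Ideal.span {∏ l, f l}]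
            ((MvPowerSeries (Fin 2) k ⧸ Ideal.span {∏ l, f l}) ⧸
              Ideal.span
                {Ideal.Quotient.mk (Ideal.span {∏ l, f l}) (∏ l ∈ Finset.Iic i, f l)}))
          ≃ₗ[MvPowerSeries (Fin 2) k ⧸ Ideal.span {∏ l, f l}]
            ↥(Submodule.span (MvPowerSeries (Fin 2) k ⧸ Ideal.span {∏ l, f l})
              ({Ideal.Quotient.mk
                  (Ideal.span
                    {Ideal.Quotient.mk (Ideal.span {∏ l, f l}) (∏ l ∈ Finset.Iic i, f l)})
                  (Ideal.Quotient.mk (Ideal.span {∏ l, f l}) (∏ l ∈ Finset.Ioc j i, f l))} :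
                Set ((MvPowerSeries (Fin 2) k ⧸ Ideal.span {∏ l, f l}) ⧸
                  Ideal.span
                    {Ideal.Quotient.mk (Ideal.span {∏ l, f l})
                      (∏ l ∈ Finset.Iic i, f l)}))))) := by
  classical
  intro i j
  set F := ∏ l, f l with hFdef
  set g := ∏ l ∈ Finset.Iic j, f l with hgdef
  set h := ∏ l ∈ Finset.Iic i, f l with hhdef
  set I : Ideal (MvPowerSeries (Fin 2) k) := Ideal.span {F} with hIdef
  set mkF := Ideal.Quotient.mk I with hmkF
  set G := mkF g with hG
  set H := mkF h with hH
  set J : Ideal (MvPowerSeries (Fin 2) k ⧸ I) := Ideal.span {H} with hJdef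
  have hFdvd : h ∣ F := Finset.prod_dvd_prod_of_subset _ _ _ (Finset.subset_univ _)
  constructor
  · -- i ≤ j
    intro hij
    have hdvd : h ∣ g :=
      Finset.prod_dvd_prod_of_subset _ _ _ (Finset.Iic_subset_Iic.mpr hij)
    refine ⟨(homQuotEquiv G ⊤ ?_ fun _ _ => trivial).trans Submodule.topEquiv⟩
    intro m _
    obtain ⟨y, rfl⟩ := Ideal.Quotient.mk_surjective m
    rw [mk_smul', Ideal.Quotient.eq_zero_iff_mem, Ideal.mem_span_singleton]
    exact Dvd.dvd.mul_right (map_dvd mkF hdvd) y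
  · -- j < i
    intro hji
    set p := ∏ l ∈ Finset.Ioc j i, f l with hpdef
    set P := Ideal.Quotient.mk J (mkF p) with hP
    have hdisj : Disjoint (Finset.Iic j) (Finset.Ioc j i) := by
      rw [Finset.disjoint_left]
      intro x hx hx'
      rw [Finset.mem_Iic] at hx
      rw [Finset.mem_Ioc] at hx'
      exact absurd hx'.1 hx.not_gt
    have hunion : Finset.Iic j ∪ Finset.Ioc j i = Finset.Iic i := by
      ext x
      simp only [Finset.mem_union, Finset.mem_Iic, Finset.mem_Ioc, Fin.le_def, Fin.lt_def]
      omega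
    have hgp : g * p = h := by
      rw [hgdef, hpdef, ← Finset.prod_union hdisj, hunion]
    have hg0 : g ≠ 0 := Finset.prod_ne_zero_iff.mpr fun l _ => (hprime l).ne_zero
    have hGP : G • P = 0 := by
      rw [hP, mk_smul', hG, ← map_mul, hgp, ← hH, Ideal.Quotient.eq_zero_iff_mem]
      exact Ideal.mem_span_singleton_self H
    refine ⟨homQuotEquiv G _ ?_ ?_⟩
    · intro m hm
      obtain ⟨c, rfl⟩ := Submodule.mem_span_singleton.mp hm
      rw [smul_comm, hGP, smul_zero]
    · intro m hm
      obtain ⟨yq, rfl⟩ := Ideal.Quotient.mk_surjective m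
      obtain ⟨x, rfl⟩ := Ideal.Quotient.mk_surjective yq
      rw [mk_smul', hG, ← map_mul, Ideal.Quotient.eq_zero_iff_mem, hJdef,
        Ideal.mem_span_singleton] at hm
      obtain ⟨z, hz⟩ := hm
      obtain ⟨c, rfl⟩ := Ideal.Quotient.mk_surjective z
      rw [hH, ← map_mul, hmkF, Ideal.Quotient.mk_eq_mk_iff_sub_mem, hIdef,
        Ideal.mem_span_singleton] at hz
      obtain ⟨d, hd⟩ := hz
      have hFeq : h * (∏ l ∈ (Finset.Iic i)ᶜ, f l) = F := Finset.prod_mul_prod_compl _ _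
      have hx : x = p * (c + (∏ l ∈ (Finset.Iic i)ᶜ, f l) * d) := by
        apply mul_left_cancel₀ hg0
        have : g * x = h * c + F * d := by linear_combination hd
        rw [this, ← hFeq, ← hgp]
        ring
      apply Submodule.mem_span_singleton.mpr
      refine ⟨mkF (c + (∏ l ∈ (Finset.Iic i)ᶜ, f l) * d), ?_⟩
      rw [hP, mk_smul', ← map_mul]
      congr 2
      rw [hx]
      ring
end
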